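/- arXiv:1610.02561 — 8 statements merged into one kernel-verified Lean document; each statement's English description precedes it below -/
import Mathlib

section
/- Let Y be a weakly irreducible combinatorial Markov chain with Martin kernel K. For each fixed x ∈ 𝔽_k, the process (K(x, Y_n))_{n > k} is a backwards martingale with respect to the filtration 𝒢_n = σ(Y_m : m ≥ n); that is, E[K(x, Y_n) | 𝒢_{n+1}] = K(x, Y_{n+1}) for all n > k. -/
/-!
Writing `A = {Y_k = x}`, the Martin kernel is `K(x, y) = P(A ∩ {Y_n = y}) / (P(A) P(Y_n = y))`,
so `P(A) K(x, Y_n)` is the conditional probability of `A` given `Y_n`. By the Markov property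
the past `σ(Y_0, …, Y_n)` and the tail `𝒢_n` are conditionally independent given `Y_n`, hence
`P(A) K(x, Y_n)` is also the conditional probability of `A` given `𝒢_n`:
`∫_s K(x, Y_n) dP = P(A ∩ s) / P(A)` for every `s ∈ 𝒢_n`. Since `𝒢_{n+1} ⊆ 𝒢_n`, the variables
`K(x, Y_n)` and `K(x, Y_{n+1})` have the same integral over every set of `𝒢_{n+1}`.

The conditional independence is first obtained for the blocks `Y_n, …, Y_{n+d}` by induction
on `d`, then for `𝒢_n` by a π-λ argument. The levels of the state space are finite, so it is
countable, and on `σ(Y_i : i ∈ t)`, `t` finite, a measure is determined by its values on the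
cylinders `{Y_i = q_i, i ∈ t}`.
-/

open MeasureTheory Filter

namespace MartinKernel

variable {Ω F : Type*}

abbrev sigmaGen [MeasurableSpace F] (Y : ℕ → Ω → F) (I : Set ℕ) : MeasurableSpace Ω :=
  ⨆ i ∈ I, MeasurableSpace.comap (Y i) inferInstance

def cylinder (Y : ℕ → Ω → F) (t : Finset ℕ) (q : ℕ → F) : Set Ω :=
  ⋂ i ∈ t, {ω | Y i ω = q i}

def MarkovProperty [MeasurableSpace Ω] (P : Measure Ω) (Y : ℕ → Ω → F) : Prop :=
  ∀ (n : ℕ) (z : F) (path : ℕ → F),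
    P (cylinder Y (Finset.range (n + 1)) path ∩ {ω | Y (n + 1) ω = z}) * P {ω | Y n ω = path n}
      = P ({ω | Y n ω = path n} ∩ {ω | Y (n + 1) ω = z})
        * P (cylinder Y (Finset.range (n + 1)) path)

lemma countable_of_finite_fibers (deg : F → ℕ) (hfin : ∀ n, {x : F | deg x = n}.Finite) :
    Countable F := by
  have hU : (Set.univ : Set F) = ⋃ n, {x | deg x = n} := by ext; simp
  rw [← Set.countable_univ_iff, hU]
  exact Set.countable_iUnion fun n => (hfin n).countable

section SigmaGen

variable [MeasurableSpace F] (Y : ℕ → Ω → F)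

lemma comap_le_sigmaGen {I : Set ℕ} {i : ℕ} (hi : i ∈ I) :
    MeasurableSpace.comap (Y i) inferInstance ≤ sigmaGen Y I :=
  le_iSup₂ (f := fun i (_ : i ∈ I) => MeasurableSpace.comap (Y i) inferInstance) i hi

lemma sigmaGen_mono {I J : Set ℕ} (h : I ⊆ J) : sigmaGen Y I ≤ sigmaGen Y J :=
  biSup_mono fun _ hi => h hi

lemma sigmaGen_le [MeasurableSpace Ω] {Y : ℕ → Ω → F} (hY : ∀ i, Measurable (Y i))
    (I : Set ℕ) : sigmaGen Y I ≤ ‹MeasurableSpace Ω› :=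
  iSup₂_le fun i _ => (hY i).comap_le

lemma sigmaGen_Ici_eq_iSup (n : ℕ) :
    sigmaGen Y (Set.Ici n) = ⨆ d, sigmaGen Y ↑(Finset.Icc n (n + d)) := by
  refine le_antisymm (iSup₂_le fun m hm => ?_) (iSup_le fun d => sigmaGen_mono Y ?_)
  · have hm' : m ∈ (↑(Finset.Icc n (n + (m - n))) : Set ℕ) := by
      simp only [Set.mem_Ici] at hm; simp; omega
    exact (comap_le_sigmaGen Y hm').trans
      (le_iSup (fun d => sigmaGen Y ↑(Finset.Icc n (n + d))) (m - n))
  · rw [Finset.coe_Icc]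
    exact Set.Icc_subset_Ici_self

variable [MeasurableSingletonClass F]

lemma measurableSet_cylinder_sigmaGen {t : Finset ℕ} {I : Set ℕ} (ht : ↑t ⊆ I) (q : ℕ → F) :
    MeasurableSet[sigmaGen Y I] (cylinder Y t q) :=
  Finset.measurableSet_biInter t fun i hi =>
    comap_le_sigmaGen Y (ht hi) _ ⟨{q i}, measurableSet_singleton _, rfl⟩

lemma measurableSet_cylinder [MeasurableSpace Ω] {Y : ℕ → Ω → F} (hY : ∀ i, Measurable (Y i))
    (t : Finset ℕ) (q : ℕ → F) : MeasurableSet (cylinder Y t q) :=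
  sigmaGen_le hY _ _ (measurableSet_cylinder_sigmaGen Y subset_rfl q)

end SigmaGen

section Cylinder

variable {Y : ℕ → Ω → F} {t : Finset ℕ} {q : ℕ → F} {m : ℕ}

lemma cylinder_subset (hm : m ∈ t) : cylinder Y t q ⊆ {ω | Y m ω = q m} :=
  fun _ hω => Set.mem_iInter₂.mp hω m hm

lemma cylinder_inter_eq_self (hm : m ∈ t) :
    cylinder Y t q ∩ {ω | Y m ω = q m} = cylinder Y t q :=
  Set.inter_eq_left.mpr (cylinder_subset hm)

lemma cylinder_inter_eq_empty (hm : m ∈ t) {a : F} (ha : q m ≠ a) :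
    cylinder Y t q ∩ {ω | Y m ω = a} = ∅ :=
  Set.eq_empty_of_forall_notMem fun _ ⟨hω, hωa⟩ => ha ((cylinder_subset hm hω).symm.trans hωa)

lemma cylinder_Icc_succ (n d : ℕ) (w : ℕ → F) :
    cylinder Y (Finset.Icc n (n + (d + 1))) w
      = cylinder Y (Finset.Icc n (n + d)) w ∩ {ω | Y (n + d + 1) ω = w (n + d + 1)} := by
  have : Finset.Icc n (n + (d + 1)) = insert (n + d + 1) (Finset.Icc n (n + d)) := by
    ext i; simp only [Finset.mem_Icc, Finset.mem_insert]; omega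
  rw [this, cylinder, Finset.set_biInter_insert, Set.inter_comm]
  rfl

end Cylinder

theorem measure_eq_on_iSup_of_monotone [MeasurableSpace Ω] {μ ν : Measure Ω} [IsFiniteMeasure μ]
    {m : ℕ → MeasurableSpace Ω} (hmono : Monotone m) (hle : ∀ d, m d ≤ ‹MeasurableSpace Ω›)
    (h : ∀ d s, MeasurableSet[m d] s → μ s = ν s) {s : Set Ω}
    (hs : MeasurableSet[⨆ d, m d] s) : μ s = ν s :=
  ext_on_measurableSpace_of_generate_finite _ (⋃ d, {s | MeasurableSet[m d] s})
    (fun s hs => by obtain ⟨d, hd⟩ := Set.mem_iUnion.mp hs; exact h d s hd) (iSup_le hle)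
    (MeasurableSpace.generateFrom_iUnion_measurableSet m).symm
    (isPiSystem_iUnion_of_monotone _ (fun d => @MeasurableSpace.isPiSystem_measurableSet Ω (m d))
      fun _ _ hij s hs => hmono hij s hs)
    (h 0 _ MeasurableSet.univ) hs

section Countable

variable [MeasurableSpace Ω] [MeasurableSpace F] [MeasurableSingletonClass F] [Countable F]
  {P : Measure Ω} {Y : ℕ → Ω → F}

theorem measure_eq_of_cylinder (hY : ∀ i, Measurable (Y i)) (t : Finset ℕ) {μ ν : Measure Ω}
    (h : ∀ q, μ (cylinder Y t q) = ν (cylinder Y t q)) {A : Set Ω}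
    (hA : MeasurableSet[sigmaGen Y t] A) : μ A = ν A := by
  set Z : Ω → (t → F) := fun ω i => Y i ω
  have hZ : Measurable Z := measurable_pi_lambda _ fun i => hY i
  have hle : sigmaGen Y t ≤ MeasurableSpace.comap Z inferInstance := iSup₂_le fun i hi => by
    rw [show Y i = (fun z : t → F => z ⟨i, hi⟩) ∘ Z from rfl, ← MeasurableSpace.comap_comp]
    exact MeasurableSpace.comap_mono (measurable_pi_apply _).comap_le
  obtain ⟨S, hS, rfl⟩ := hle A hA
  have hmap : μ.map Z = ν.map Z := Measure.ext_of_singleton fun z => by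
    rw [Measure.map_apply hZ (measurableSet_singleton z),
      Measure.map_apply hZ (measurableSet_singleton z)]
    rcases (Z ⁻¹' {z}).eq_empty_or_nonempty with hz | ⟨ω₀, rfl⟩
    · simp [hz]
    · have hfib : Z ⁻¹' {Z ω₀} = cylinder Y t fun i => Y i ω₀ := by
        ext ω; simp [Z, cylinder, funext_iff]
      rw [hfib, h]
  rw [← Measure.map_apply hZ hS, hmap, Measure.map_apply hZ hS]

theorem MarkovProperty.condIndep_past_next (hY : ∀ i, Measurable (Y i))
    (hM : MarkovProperty P Y) {m : ℕ} {A : Set Ω}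
    (hA : MeasurableSet[sigmaGen Y ↑(Finset.range (m + 1))] A) (a b : F) :
    P (A ∩ {ω | Y m ω = a} ∩ {ω | Y (m + 1) ω = b}) * P {ω | Y m ω = a}
      = P (A ∩ {ω | Y m ω = a}) * P ({ω | Y m ω = a} ∩ {ω | Y (m + 1) ω = b}) := by
  set Ea := {ω | Y m ω = a}
  set Eab := Ea ∩ {ω | Y (m + 1) ω = b}
  have hm : m ∈ Finset.range (m + 1) := Finset.self_mem_range_succ m
  have key := measure_eq_of_cylinder hY _ (μ := P Ea • P.restrict Eab)
    (ν := P Eab • P.restrict Ea) (fun q => ?_) hA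
  · simpa [Measure.restrict_apply (sigmaGen_le hY _ _ hA), Eab, Set.inter_assoc, mul_comm]
      using key
  simp only [Measure.smul_apply, Measure.restrict_apply (measurableSet_cylinder hY _ q),
    smul_eq_mul, Eab, ← Set.inter_assoc]
  by_cases hq : q m = a
  · subst hq
    rw [cylinder_inter_eq_self hm, mul_comm, hM m b q, mul_comm]
  · simp [Ea, cylinder_inter_eq_empty hm hq]

theorem MarkovProperty.condIndep_past_block [IsFiniteMeasure P] (hY : ∀ i, Measurable (Y i))
    (hM : MarkovProperty P Y) {n : ℕ} {A : Set Ω}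
    (hA : MeasurableSet[sigmaGen Y ↑(Finset.range (n + 1))] A) (w : ℕ → F) (d : ℕ) :
    P (A ∩ cylinder Y (Finset.Icc n (n + d)) w) * P {ω | Y n ω = w n}
      = P (A ∩ {ω | Y n ω = w n}) * P (cylinder Y (Finset.Icc n (n + d)) w) := by
  induction d with
  | zero => simp [cylinder, mul_comm]
  | succ d ih =>
    set D := cylinder Y (Finset.Icc n (n + d)) w
    set Ea := {ω | Y (n + d) ω = w (n + d)}
    set Eb := {ω | Y (n + d + 1) ω = w (n + d + 1)}
    have hDa : D ∩ Ea = D := cylinder_inter_eq_self (by simp)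
    have hpast : ∀ B, MeasurableSet[sigmaGen Y ↑(Finset.range (n + 1))] B →
        MeasurableSet[sigmaGen Y ↑(Finset.range (n + d + 1))] (B ∩ D) := fun B hB =>
      (sigmaGen_mono Y (by simp) _ hB).inter
        (measurableSet_cylinder_sigmaGen Y (by intro i; simp) w)
    have hAD := hM.condIndep_past_next hY (hpast A hA) (w (n + d)) (w (n + d + 1))
    have hD := hM.condIndep_past_next hY (hpast _ MeasurableSet.univ) (w (n + d)) (w (n + d + 1))
    rw [Set.inter_assoc A, hDa] at hAD
    rw [Set.univ_inter, hDa] at hD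
    rw [cylinder_Icc_succ, ← Set.inter_assoc]
    by_cases hβ : P Ea = 0
    · have hDnull : P D = 0 := measure_mono_null (cylinder_subset (by simp)) hβ
      rw [measure_mono_null (Set.inter_subset_left.trans Set.inter_subset_right) hDnull,
        measure_mono_null Set.inter_subset_left hDnull, zero_mul, mul_zero]
    · rw [← ENNReal.mul_left_inj hβ (measure_ne_top P Ea)]
      calc P (A ∩ D ∩ Eb) * P {ω | Y n ω = w n} * P Ea
          = P (A ∩ D ∩ Eb) * P Ea * P {ω | Y n ω = w n} := by ring
        _ = P (A ∩ D) * P {ω | Y n ω = w n} * P (Ea ∩ Eb) := by rw [hAD]; ring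
        _ = P (A ∩ {ω | Y n ω = w n}) * (P D * P (Ea ∩ Eb)) := by rw [ih]; ring
        _ = P (A ∩ {ω | Y n ω = w n}) * P (D ∩ Eb) * P Ea := by rw [← hD]; ring

theorem MarkovProperty.condIndep_past_tail [IsFiniteMeasure P] (hY : ∀ i, Measurable (Y i))
    (hM : MarkovProperty P Y) {n : ℕ} {A : Set Ω}
    (hA : MeasurableSet[sigmaGen Y ↑(Finset.range (n + 1))] A) (z : F) {s : Set Ω}
    (hs : MeasurableSet[sigmaGen Y (Set.Ici n)] s) :
    P (A ∩ {ω | Y n ω = z} ∩ s) * P {ω | Y n ω = z}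
      = P (A ∩ {ω | Y n ω = z}) * P ({ω | Y n ω = z} ∩ s) := by
  set E := {ω | Y n ω = z}
  have : IsFiniteMeasure (P E • P.restrict (A ∩ E)) :=
    ⟨by simpa using ENNReal.mul_lt_top (measure_lt_top P E) (measure_lt_top P _)⟩
  have hs' := sigmaGen_le hY _ _ hs
  rw [sigmaGen_Ici_eq_iSup] at hs
  have key := measure_eq_on_iSup_of_monotone
    (m := fun d => sigmaGen Y ↑(Finset.Icc n (n + d)))
    (μ := P E • P.restrict (A ∩ E)) (ν := P (A ∩ E) • P.restrict E)
    (fun _ _ h => sigmaGen_mono Y (Finset.coe_subset.mpr (Finset.Icc_subset_Icc le_rfl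
      (by omega))))
    (fun _ => sigmaGen_le hY _)
    (fun d _ ht => measure_eq_of_cylinder hY _ (fun q => ?_) ht) hs
  · rw [Measure.smul_apply, Measure.smul_apply, Measure.restrict_apply hs',
      Measure.restrict_apply hs', smul_eq_mul, smul_eq_mul] at key
    rw [Set.inter_comm (A ∩ E), Set.inter_comm E, mul_comm, key]
  have hn : n ∈ Finset.Icc n (n + d) := by simp
  simp only [Measure.smul_apply, Measure.restrict_apply (measurableSet_cylinder hY _ q),
    smul_eq_mul]
  by_cases hq : q n = z
  · subst hq
    rw [Set.inter_left_comm, cylinder_inter_eq_self hn, mul_comm,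
      hM.condIndep_past_block hY hA q d]
  · simp [E, Set.inter_left_comm _ A, cylinder_inter_eq_empty hn hq]

end Countable

section FiniteRange

variable [MeasurableSpace Ω] [MeasurableSpace F] [MeasurableSingletonClass F] {P : Measure Ω}
  [IsFiniteMeasure P] {Z : Ω → F} {L : Finset F}

lemma setIntegral_comp_eq_sum (hZ : Measurable Z) (hL : ∀ᵐ ω ∂P, Z ω ∈ L) (f : F → ℝ)
    (s : Set Ω) : ∫ ω in s, f (Z ω) ∂P = ∑ z ∈ L, f z * P.real ({ω | Z ω = z} ∩ s) := by
  have hfib : ∀ z, MeasurableSet {ω | Z ω = z} := fun z => hZ (measurableSet_singleton z)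
  have hsum : ∀ᵐ ω ∂P.restrict s,
      f (Z ω) = ∑ z ∈ L, {ω | Z ω = z}.indicator (fun _ => f z) ω :=
    (ae_restrict_of_ae hL).mono fun ω hω => by
      rw [Finset.sum_eq_single_of_mem (Z ω) hω fun z _ hz =>
        Set.indicator_of_notMem (s := {ω | Z ω = z}) (Ne.symm hz) _]
      exact (Set.indicator_of_mem (s := {ω | Z ω = Z ω}) rfl fun _ => f (Z ω)).symm
  rw [integral_congr_ae hsum,
    integral_finsetSum _ fun z _ => (integrable_const _).indicator (hfib z)]
  refine Finset.sum_congr rfl fun z _ => ?_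
  rw [integral_indicator_const _ (hfib z), measureReal_restrict_apply (hfib z), smul_eq_mul,
    mul_comm]

lemma measureReal_eq_sum_inter (hZ : Measurable Z) (hL : ∀ᵐ ω ∂P, Z ω ∈ L) (S : Set Ω) :
    P.real S = ∑ z ∈ L, P.real (S ∩ {ω | Z ω = z}) := by
  calc P.real S = (P.restrict S).real (Z ⁻¹' L) := by
        rw [measureReal_restrict_apply (hZ L.measurableSet), measureReal_def, measureReal_def,
          Set.inter_comm, measure_inter_conull (t := Z ⁻¹' L) (ae_iff.mp hL)]
    _ = ∑ z ∈ L, (P.restrict S).real (Z ⁻¹' {z}) :=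
        (sum_measureReal_preimage_singleton L fun z _ => hZ (measurableSet_singleton z)).symm
    _ = ∑ z ∈ L, P.real (S ∩ {ω | Z ω = z}) := by
        simp only [measureReal_restrict_apply (hZ (measurableSet_singleton _)), Set.inter_comm]
        rfl

lemma integrable_comp_of_ae_mem [Countable F] (hZ : Measurable Z) (hL : ∀ᵐ ω ∂P, Z ω ∈ L)
    (f : F → ℝ) : Integrable (fun ω => f (Z ω)) P :=
  Integrable.of_bound ((measurable_of_countable f).comp hZ).aestronglyMeasurable
    (∑ z ∈ L, ‖f z‖) (hL.mono fun _ hω =>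
      Finset.single_le_sum (f := fun z => ‖f z‖) (fun _ _ => norm_nonneg _) hω)

end FiniteRange

theorem MarkovProperty.setIntegral_martinKernel [MeasurableSpace Ω] [MeasurableSpace F]
    [MeasurableSingletonClass F] [Countable F] {P : Measure Ω} [IsFiniteMeasure P]
    {Y : ℕ → Ω → F} (hY : ∀ i, Measurable (Y i)) (hM : MarkovProperty P Y) {k n : ℕ}
    (hkn : k ≤ n) (x : F) {L : Finset F} (hL : ∀ᵐ ω ∂P, Y n ω ∈ L) (K : F → ℝ)
    (hK : ∀ z ∈ L, K z = P.real ({ω | Y k ω = x} ∩ {ω | Y n ω = z}) / P.real {ω | Y k ω = x}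
      / P.real {ω | Y n ω = z})
    {s : Set Ω} (hs : MeasurableSet[sigmaGen Y (Set.Ici n)] s) :
    ∫ ω in s, K (Y n ω) ∂P = P.real ({ω | Y k ω = x} ∩ s) / P.real {ω | Y k ω = x} := by
  set A := {ω | Y k ω = x}
  have hA : MeasurableSet[sigmaGen Y ↑(Finset.range (n + 1))] A :=
    comap_le_sigmaGen Y (by simp; omega) _ ⟨{x}, measurableSet_singleton x, rfl⟩
  rw [setIntegral_comp_eq_sum (hY n) hL K s, measureReal_eq_sum_inter (hY n) hL (A ∩ s),
    Finset.sum_div]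
  refine Finset.sum_congr rfl fun z hz => ?_
  set E := {ω | Y n ω = z}
  have hci := congrArg ENNReal.toReal (hM.condIndep_past_tail hY hA z hs)
  simp only [ENNReal.toReal_mul, ← measureReal_def] at hci
  rw [hK z hz, Set.inter_right_comm]
  rcases eq_or_ne (P.real E) 0 with hE | hE
  · rw [hE, div_zero, zero_mul, measureReal_mono_null Set.inter_subset_left
      (measureReal_mono_null Set.inter_subset_right hE), zero_div]
  · calc P.real (A ∩ E) / P.real A / P.real E * P.real (E ∩ s)
        = P.real (A ∩ E) * P.real (E ∩ s) / P.real E / P.real A := by ring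
      _ = P.real (A ∩ E ∩ s) / P.real A := by rw [← hci, mul_div_cancel_right₀ _ hE]

end MartinKernel

open MartinKernel in
theorem martin_kernel_backwards_martingale_general
    {Ω F : Type*} [MeasurableSpace Ω] [MeasurableSpace F] [MeasurableSingletonClass F]
    (P : Measure Ω) [IsProbabilityMeasure P]
    (deg : F → ℕ) (hfin : ∀ n, {x : F | deg x = n}.Finite)
    (Y : ℕ → Ω → F) (hY : ∀ n, Measurable (Y n))
    (hadapted : ∀ n, ∀ᵐ ω ∂P, deg (Y n ω) = n)
    (hMarkov : ∀ (n : ℕ) (z : F) (path : ℕ → F),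
      P ((⋂ i ∈ Finset.range (n + 1), {ω | Y i ω = path i}) ∩ {ω | Y (n + 1) ω = z})
          * P {ω | Y n ω = path n}
        = P ({ω | Y n ω = path n} ∩ {ω | Y (n + 1) ω = z})
          * P (⋂ i ∈ Finset.range (n + 1), {ω | Y i ω = path i}))
    -- the Martin kernel: K(x,y) = P(Y_n=y | Y_m=x)/P(Y_n=y) for deg x ≤ deg y, else 0
    (K : F → F → ℝ)
    (hK : ∀ x y : F, deg x ≤ deg y →
      K x y = ((P ({ω | Y (deg x) ω = x} ∩ {ω | Y (deg y) ω = y})).toReal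
                / (P {ω | Y (deg x) ω = x}).toReal)
              / (P {ω | Y (deg y) ω = y}).toReal)
    -- the backwards (tail) filtration 𝒢_n = σ(Y_m : m ≥ n)
    (𝒢 : ℕ → MeasurableSpace Ω)
    (h𝒢 : ∀ n, 𝒢 n = ⨆ m ∈ Set.Ici n, MeasurableSpace.comap (Y m) inferInstance)
    (x : F) (k : ℕ) (hx : deg x = k) :
    ∀ n : ℕ, k < n →
      P[(fun ω => K x (Y n ω)) | 𝒢 (n + 1)] =ᵐ[P] fun ω => K x (Y (n + 1) ω) := by
  intro n hn
  have : Countable F := countable_of_finite_fibers deg hfin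
  have hL : ∀ j, ∀ᵐ ω ∂P, Y j ω ∈ (hfin j).toFinset := fun j =>
    (hadapted j).mono fun _ h => (hfin j).mem_toFinset.mpr h
  have hint : ∀ j, Integrable (fun ω => K x (Y j ω)) P := fun j =>
    integrable_comp_of_ae_mem (hY j) (hL j) (K x)
  have hsetIntegral : ∀ j, k ≤ j → ∀ s, MeasurableSet[𝒢 j] s →
      ∫ ω in s, K x (Y j ω) ∂P = P.real ({ω | Y k ω = x} ∩ s) / P.real {ω | Y k ω = x} :=
    fun j hj s hs => MarkovProperty.setIntegral_martinKernel hY hMarkov hj x (hL j) (K x)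
      (fun z hz => by
        have hz : deg z = j := (hfin j).mem_toFinset.mp hz
        rw [hK x z (by omega), hx, hz]; rfl)
      (by rw [h𝒢] at hs; exact hs)
  have hanti : 𝒢 (n + 1) ≤ 𝒢 n := by
    rw [h𝒢, h𝒢]; exact sigmaGen_mono Y (Set.Ici_subset_Ici.mpr n.le_succ)
  have hm : 𝒢 (n + 1) ≤ ‹MeasurableSpace Ω› := h𝒢 (n + 1) ▸ sigmaGen_le hY _
  have hmeas : Measurable[𝒢 (n + 1)] fun ω => K x (Y (n + 1) ω) :=
    (measurable_of_countable (K x)).comp (Measurable.of_comap_le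
      (h𝒢 (n + 1) ▸ comap_le_sigmaGen Y (Set.mem_Ici.mpr le_rfl)))
  refine (ae_eq_condExp_of_forall_setIntegral_eq hm (hint n)
    (fun _ _ _ => (hint (n + 1)).integrableOn) (fun s hs _ => ?_)
    hmeas.stronglyMeasurable.aestronglyMeasurable).symm
  rw [hsetIntegral (n + 1) (by omega) s hs, hsetIntegral n hn.le s (hanti s hs)]

/-- For a weakly irreducible CMC with Martin kernel K and fixed
x ∈ 𝔽_k, the process (K(x,Y_n))_{n>k} is a backwards martingale w.r.t.
𝒢_n = σ(Y_m : m ≥ n): E[K(x,Y_n) | 𝒢_{n+1}] = K(x,Y_{n+1}) for n > k. -/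
theorem martin_kernel_backwards_martingale
    {Ω F : Type*} [MeasurableSpace Ω] [MeasurableSpace F] [MeasurableSingletonClass F]
    (P : Measure Ω) [IsProbabilityMeasure P]
    (deg : F → ℕ) (hfin : ∀ n, {x : F | deg x = n}.Finite)
    (e : F) (hdeg_e : deg e = 0) (hF0 : ∀ x : F, deg x = 0 → x = e)
    (Y : ℕ → Ω → F) (hY : ∀ n, Measurable (Y n))
    (hadapted : ∀ n, ∀ᵐ ω ∂P, deg (Y n ω) = n)
    (hY0 : ∀ᵐ ω ∂P, Y 0 ω = e)
    (hirr : ∀ (n : ℕ) (x : F), deg x = n → 0 < P {ω | Y n ω = x})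
    (hMarkov : ∀ (n : ℕ) (z : F) (path : ℕ → F),
      P ((⋂ i ∈ Finset.range (n + 1), {ω | Y i ω = path i}) ∩ {ω | Y (n + 1) ω = z})
          * P {ω | Y n ω = path n}
        = P ({ω | Y n ω = path n} ∩ {ω | Y (n + 1) ω = z})
          * P (⋂ i ∈ Finset.range (n + 1), {ω | Y i ω = path i}))
    -- the Martin kernel: K(x,y) = P(Y_n=y | Y_m=x)/P(Y_n=y) for deg x ≤ deg y, else 0
    (K : F → F → ℝ)
    (hK : ∀ x y : F, deg x ≤ deg y →
      K x y = ((P ({ω | Y (deg x) ω = x} ∩ {ω | Y (deg y) ω = y})).toReal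
                / (P {ω | Y (deg x) ω = x}).toReal)
              / (P {ω | Y (deg y) ω = y}).toReal)
    (hK0 : ∀ x y : F, ¬ deg x ≤ deg y → K x y = 0)
    -- the backwards (tail) filtration 𝒢_n = σ(Y_m : m ≥ n)
    (𝒢 : ℕ → MeasurableSpace Ω)
    (h𝒢 : ∀ n, 𝒢 n = ⨆ m ∈ Set.Ici n, MeasurableSpace.comap (Y m) inferInstance)
    (x : F) (k : ℕ) (hx : deg x = k) :
    ∀ n : ℕ, k < n →
      P[(fun ω => K x (Y n ω)) | 𝒢 (n + 1)] =ᵐ[P] fun ω => K x (Y (n + 1) ω) :=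
  martin_kernel_backwards_martingale_general P deg hfin Y hY hadapted hMarkov K hK 𝒢 h𝒢 x k hx
end

section
/- Let Y be a weakly irreducible CMC with Martin kernel K and Doob–Martin limit Y_∞. For every nonnegative harmonic h with h(e) = 1 and every x with h(x) > 0, h(x) = ∫ K(x,α) dP_h^{Y_∞}(dα), where P_h^{Y_∞} is the law of the boundary limit under the h-transform P_h. -/
open MeasureTheory Filter

noncomputable def auxPaths {F : Type*} (deg : F → ℕ) (hfin : ∀ n, {x : F | deg x = n}.Finite)
    (e : F) : ℕ → Finset (ℕ → F) :=
  letI := Classical.decEq (ℕ → F)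
  fun n => match n with
  | 0 => {fun _ => e}
  | n + 1 => ((auxPaths deg hfin e n) ×ˢ (hfin (n+1)).toFinset).image
      (fun pz => Function.update pz.1 (n+1) pz.2)

noncomputable def auxPathsThru {F : Type*} (deg : F → ℕ)
    (hfin : ∀ n, {x : F | deg x = n}.Finite) (e : F)
    (m n : ℕ) (x y : F) : Finset (ℕ → F) :=
  letI := Classical.dec
  (auxPaths deg hfin e n).filter (fun p => p m = x ∧ p n = y)

lemma mem_auxPathsThru {F : Type*} {deg : F → ℕ} {hfin : ∀ n, {x : F | deg x = n}.Finite}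
    {e : F} {m n : ℕ} {x y : F} {p : ℕ → F} :
    p ∈ auxPathsThru deg hfin e m n x y ↔
      p ∈ auxPaths deg hfin e n ∧ p m = x ∧ p n = y := by
  simp [auxPathsThru, Finset.mem_filter]

lemma auxPaths_spec {F : Type*} (deg : F → ℕ) (hfin : ∀ n, {x : F | deg x = n}.Finite)
    (e : F) (hdeg_e : deg e = 0) :
    ∀ n, ∀ p ∈ auxPaths deg hfin e n,
      (∀ i, i ≤ n → deg (p i) = i) ∧ (∀ i, n < i → p i = e) := by
  intro n
  induction n with
  | zero =>
    intro p hp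
    simp only [auxPaths, Finset.mem_singleton] at hp
    subst hp
    constructor
    · intro i hi; interval_cases i; exact hdeg_e
    · intro i _; rfl
  | succ n ih =>
    intro p hp
    simp only [auxPaths, Finset.mem_image, Finset.mem_product] at hp
    obtain ⟨⟨q, z⟩, ⟨hq, hz⟩, rfl⟩ := hp
    obtain ⟨hq1, hq2⟩ := ih q hq
    simp only [Set.Finite.mem_toFinset, Set.mem_setOf_eq] at hz
    constructor
    · intro i hi
      rcases Nat.lt_succ_iff_lt_or_eq.mp (Nat.lt_succ_of_le hi) with hlt | rfl
      · rw [Function.update_of_ne (by omega)]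
        exact hq1 i (by omega)
      · rw [Function.update_self]; exact hz
    · intro i hi
      rw [Function.update_of_ne (by omega)]
      exact hq2 i (by omega)

lemma aux_insert_coord {Ω F : Type*} [MeasurableSpace Ω] [MeasurableSpace F]
    [MeasurableSingletonClass F]
    (μ : Measure Ω) (deg : F → ℕ) {n : ℕ} (hfin : {x : F | deg x = n}.Finite)
    (Y : ℕ → Ω → F) (hY : ∀ k, Measurable (Y k))
    (had : ∀ᵐ ω ∂μ, deg (Y n ω) = n) {T : Set Ω} (hT : MeasurableSet T) :
    μ T = ∑ y ∈ hfin.toFinset, μ (T ∩ {ω | Y n ω = y}) := by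
  have hG : {ω : Ω | deg (Y n ω) = n} = ⋃ y ∈ hfin.toFinset, {ω | Y n ω = y} := by
    ext ω
    simp only [Set.mem_setOf_eq, Set.mem_iUnion, Set.Finite.mem_toFinset, Set.mem_setOf_eq,
      exists_prop]
    constructor
    · intro hd; exact ⟨Y n ω, hd, rfl⟩
    · rintro ⟨y, hy, hyy⟩; rw [hyy]; exact hy
  have h1 : μ T = μ (T ∩ {ω : Ω | deg (Y n ω) = n}) := by
    exact (measure_inter_conull had).symm
  rw [h1, hG, Set.inter_iUnion₂]
  rw [measure_biUnion_finset]
  · intro a ha b hb hab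
    simp only [Function.onFun]
    apply Set.disjoint_left.mpr
    rintro ω ⟨-, h1⟩ ⟨-, h2⟩
    exact hab (h1.symm.trans h2)
  · intro y hy
    exact hT.inter ((hY n) (measurableSet_singleton y))

lemma aux_cyl_measurable {Ω F : Type*} [MeasurableSpace Ω] [MeasurableSpace F]
    [MeasurableSingletonClass F] (Y : ℕ → Ω → F) (hY : ∀ k, Measurable (Y k))
    (n : ℕ) (p : ℕ → F) :
    MeasurableSet (⋂ i ∈ Finset.Icc 1 n, {ω | Y i ω = p i}) := by
  apply Set.Finite.measurableSet_biInter (Finset.finite_toSet _)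
  intro i _
  exact (hY i) (measurableSet_singleton (p i))

lemma aux_path_decomp {Ω F : Type*} [MeasurableSpace Ω] [MeasurableSpace F]
    [MeasurableSingletonClass F]
    (μ : Measure Ω) (deg : F → ℕ) (hfin : ∀ n, {x : F | deg x = n}.Finite)
    (e : F) (hdeg_e : deg e = 0)
    (Y : ℕ → Ω → F) (hY : ∀ k, Measurable (Y k))
    (had : ∀ k, ∀ᵐ ω ∂μ, deg (Y k ω) = k)
    (n : ℕ) {T : Set Ω} (hT : MeasurableSet T) :
    μ T = ∑ p ∈ auxPaths deg hfin e n,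
      μ (T ∩ ⋂ i ∈ Finset.Icc 1 n, {ω | Y i ω = p i}) := by
  induction n with
  | zero =>
    simp [auxPaths]
  | succ n ih =>
    rw [ih]
    have step : ∀ p ∈ auxPaths deg hfin e n,
        μ (T ∩ ⋂ i ∈ Finset.Icc 1 n, {ω | Y i ω = p i})
          = ∑ z ∈ (hfin (n+1)).toFinset,
            μ ((T ∩ ⋂ i ∈ Finset.Icc 1 n, {ω | Y i ω = p i}) ∩ {ω | Y (n+1) ω = z}) := by
      intro p _
      exact aux_insert_coord μ deg (hfin (n+1)) Y hY (had (n+1))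
        (hT.inter (aux_cyl_measurable Y hY n p))
    rw [Finset.sum_congr rfl step]
    -- now RHS of goal is sum over image
    classical
    show _ = ∑ p ∈ ((auxPaths deg hfin e n) ×ˢ (hfin (n+1)).toFinset).image
        (fun pz => Function.update pz.1 (n+1) pz.2), _
    rw [Finset.sum_image, Finset.sum_product]
    · apply Finset.sum_congr rfl
      intro p hp
      apply Finset.sum_congr rfl
      intro z hz
      congr 1
      have hpe : p (n+1) = e := ((auxPaths_spec deg hfin e hdeg_e n p hp).2) (n+1) (by omega)
      have hicc : Finset.Icc 1 (n+1) = insert (n+1) (Finset.Icc 1 n) := by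
        ext i; simp [Finset.mem_Icc, Finset.mem_insert]; omega
      rw [hicc, Finset.set_biInter_insert]
      have : ∀ i ∈ Finset.Icc 1 n, Function.update p (n+1) z i = p i := by
        intro i hi
        simp only [Finset.mem_Icc] at hi
        exact Function.update_of_ne (by omega) _ _
      have hrest : (⋂ i ∈ Finset.Icc 1 n, {ω | Y i ω = Function.update p (n+1) z i})
          = ⋂ i ∈ Finset.Icc 1 n, {ω | Y i ω = p i} := by
        apply Set.iInter₂_congr
        intro i hi
        rw [this i hi]
      rw [hrest, Function.update_self]
      rw [Set.inter_comm {ω | Y (n+1) ω = z}, Set.inter_assoc]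
    · -- injectivity
      rintro ⟨p, z⟩ hpz ⟨q, w⟩ hqw heq
      simp only [Finset.mem_coe, Finset.mem_product] at hpz hqw
      have hpe : p (n+1) = e := ((auxPaths_spec deg hfin e hdeg_e n p hpz.1).2) (n+1) (by omega)
      have hqe : q (n+1) = e := ((auxPaths_spec deg hfin e hdeg_e n q hqw.1).2) (n+1) (by omega)
      have hz : z = w := by
        have := congrFun heq (n+1)
        simpa [Function.update_self] using this
      have hpq : p = q := by
        funext i
        by_cases hi : i = n+1
        · rw [hi, hpe, hqe]
        · have := congrFun heq i
          simpa [Function.update_of_ne hi] using this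
      rw [hpq, hz]

lemma aux_two_point_decomp {Ω F : Type*} [MeasurableSpace Ω] [MeasurableSpace F]
    [MeasurableSingletonClass F]
    (P : Measure Ω) (deg : F → ℕ) (hfin : ∀ n, {x : F | deg x = n}.Finite)
    (e : F) (hdeg_e : deg e = 0) (hF0 : ∀ x : F, deg x = 0 → x = e)
    (Y : ℕ → Ω → F) (hY : ∀ k, Measurable (Y k))
    (had : ∀ k, ∀ᵐ ω ∂P, deg (Y k ω) = k)
    (hY0 : ∀ᵐ ω ∂P, Y 0 ω = e)
    (m n : ℕ) (hmn : m ≤ n) (hn : 1 ≤ n) (x y : F) (hx : deg x = m) (hy : deg y = n)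
    {W : Set Ω} (hW : MeasurableSet W) :
    P ({ω | Y m ω = x} ∩ {ω | Y n ω = y} ∩ W)
      = ∑ p ∈ auxPathsThru deg hfin e m n x y,
          P ((⋂ i ∈ Finset.Icc 1 n, {ω | Y i ω = p i}) ∩ W) := by
  classical
  have hT : MeasurableSet ({ω | Y m ω = x} ∩ {ω | Y n ω = y} ∩ W) :=
    (((hY m) (measurableSet_singleton x)).inter ((hY n) (measurableSet_singleton y))).inter hW
  rw [aux_path_decomp P deg hfin e hdeg_e Y hY had n hT, auxPathsThru, Finset.sum_filter]
  apply Finset.sum_congr rfl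
  intro p hp
  obtain ⟨hspec1, hspec2⟩ := auxPaths_spec deg hfin e hdeg_e n p hp
  have hCy : (⋂ i ∈ Finset.Icc 1 n, {ω | Y i ω = p i}) ⊆ {ω | Y n ω = p n} :=
    Set.biInter_subset_of_mem (Finset.mem_Icc.mpr ⟨by omega, by omega⟩)
  by_cases hc : p m = x ∧ p n = y
  · rw [if_pos hc]
    obtain ⟨hcm, hcn⟩ := hc
    rcases Nat.eq_zero_or_pos m with hm0 | hm1
    · -- m = 0 : x = e, use that {Y 0 = e} is conull
      subst hm0
      have hxe : x = e := hF0 x hx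
      have hset : {ω | Y 0 ω = x} ∩ {ω | Y n ω = y} ∩ W
            ∩ (⋂ i ∈ Finset.Icc 1 n, {ω | Y i ω = p i})
          = ((⋂ i ∈ Finset.Icc 1 n, {ω | Y i ω = p i}) ∩ W) ∩ {ω | Y 0 ω = e} := by
        ext ω
        simp only [Set.mem_inter_iff, Set.mem_setOf_eq, hxe]
        constructor
        · rintro ⟨⟨⟨h0, hyn⟩, hw⟩, hC⟩; exact ⟨⟨hC, hw⟩, h0⟩
        · rintro ⟨⟨hC, hw⟩, h0⟩
          exact ⟨⟨⟨h0, by rw [← hcn]; exact hCy hC⟩, hw⟩, hC⟩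
      rw [hset]
      apply measure_inter_conull
      have : {ω : Ω | Y 0 ω = e}ᶜ = {ω : Ω | ¬ (Y 0 ω = e)} := rfl
      rw [this]
      exact hY0
    · -- m ≥ 1 : exact set equality
      have hCx : (⋂ i ∈ Finset.Icc 1 n, {ω | Y i ω = p i}) ⊆ {ω | Y m ω = p m} :=
        Set.biInter_subset_of_mem (Finset.mem_Icc.mpr ⟨by omega, by omega⟩)
      congr 1
      ext ω
      simp only [Set.mem_inter_iff, Set.mem_setOf_eq]
      constructor
      · rintro ⟨⟨⟨hxm, hyn⟩, hw⟩, hC⟩; exact ⟨hC, hw⟩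
      · rintro ⟨hC, hw⟩
        exact ⟨⟨⟨by rw [← hcm]; exact hCx hC, by rw [← hcn]; exact hCy hC⟩, hw⟩, hC⟩
  · rw [if_neg hc]
    -- the intersection is empty
    have : {ω | Y m ω = x} ∩ {ω | Y n ω = y} ∩ W
        ∩ (⋂ i ∈ Finset.Icc 1 n, {ω | Y i ω = p i}) = ∅ := by
      rcases Classical.em (p n = y) with hpn | hpn
      · -- then p m ≠ x, and m ≥ 1 (since p 0 = e = x would hold if m = 0)
        have hpm : p m ≠ x := fun hpm => hc ⟨hpm, hpn⟩
        have hm1 : 1 ≤ m := by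
          rcases Nat.eq_zero_or_pos m with hm0 | hm1
          · exfalso; apply hpm
            rw [hF0 (p m) (by rw [hm0]; exact hspec1 0 (by omega)),
              hF0 x (hx.trans hm0)]
          · exact hm1
        have hCx : (⋂ i ∈ Finset.Icc 1 n, {ω | Y i ω = p i}) ⊆ {ω | Y m ω = p m} :=
          Set.biInter_subset_of_mem (Finset.mem_Icc.mpr ⟨by omega, by omega⟩)
        ext ω
        simp only [Set.mem_inter_iff, Set.mem_setOf_eq, Set.mem_empty_iff_false, iff_false]
        rintro ⟨⟨⟨hxm, hyn⟩, hw⟩, hC⟩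
        exact hpm ((hCx hC).symm.trans hxm)
      · ext ω
        simp only [Set.mem_inter_iff, Set.mem_setOf_eq, Set.mem_empty_iff_false, iff_false]
        rintro ⟨⟨⟨hxm, hyn⟩, hw⟩, hC⟩
        exact hpn ((hCy hC).symm.trans hyn)
    rw [this, measure_empty]

lemma aux_marginal {Ω F : Type*} [MeasurableSpace Ω] [MeasurableSpace F]
    [MeasurableSingletonClass F]
    (P : Measure Ω) [IsProbabilityMeasure P]
    (deg : F → ℕ) (hfin : ∀ n, {x : F | deg x = n}.Finite)
    (e : F) (hdeg_e : deg e = 0) (hF0 : ∀ x : F, deg x = 0 → x = e)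
    (Y : ℕ → Ω → F) (hY : ∀ k, Measurable (Y k))
    (hadapted : ∀ k, ∀ᵐ ω ∂P, deg (Y k ω) = k)
    (hY0 : ∀ᵐ ω ∂P, Y 0 ω = e)
    (h : F → ℝ) (he : h e = 1)
    (Q : Measure Ω) [IsProbabilityMeasure Q]
    (hQ0 : Q {ω | Y 0 ω = e} = 1)
    (hQadapted : ∀ k, ∀ᵐ ω ∂Q, deg (Y k ω) = k)
    (hQdens : ∀ (n : ℕ) (path : ℕ → F), (∀ i ≤ n, deg (path i) = i) →
      (Q (⋂ i ∈ Finset.Icc 1 n, {ω | Y i ω = path i})).toReal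
        = h (path n) * (P (⋂ i ∈ Finset.Icc 1 n, {ω | Y i ω = path i})).toReal)
    (n : ℕ) (y : F) (hy : deg y = n) :
    (Q {ω | Y n ω = y}).toReal = h y * (P {ω | Y n ω = y}).toReal := by
  classical
  have hmY0 : MeasurableSet {ω : Ω | Y 0 ω = e} := (hY 0) (measurableSet_singleton e)
  have hQY0 : ∀ᵐ ω ∂Q, Y 0 ω = e := by
    have : Q {ω | Y 0 ω = e}ᶜ = 0 := by
      rw [measure_compl hmY0 (measure_ne_top _ _), hQ0, measure_univ, tsub_self]
    exact this
  rcases Nat.eq_zero_or_pos n with hn0 | hn1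
  · subst hn0
    have hye : y = e := hF0 y hy
    rw [hye]
    have hP1 : P {ω | Y 0 ω = e} = 1 :=
      (prob_compl_eq_zero_iff hmY0).mp hY0
    rw [hP1, hQ0, he]
    norm_num
  · -- n ≥ 1 : use path decomposition for both P and Q
    have hQdec := aux_two_point_decomp Q deg hfin e hdeg_e hF0 Y hY hQadapted hQY0
      0 n (by omega) hn1 e y hdeg_e hy (W := Set.univ) MeasurableSet.univ
    have hPdec := aux_two_point_decomp P deg hfin e hdeg_e hF0 Y hY hadapted hY0
      0 n (by omega) hn1 e y hdeg_e hy (W := Set.univ) MeasurableSet.univ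
    simp only [Set.inter_univ] at hQdec hPdec
    have hQ' : Q {ω | Y n ω = y} = Q ({ω | Y 0 ω = e} ∩ {ω | Y n ω = y}) := by
      rw [Set.inter_comm, measure_inter_conull hQY0]
    have hP' : P {ω | Y n ω = y} = P ({ω | Y 0 ω = e} ∩ {ω | Y n ω = y}) := by
      rw [Set.inter_comm, measure_inter_conull hY0]
    rw [hQ', hP', hQdec, hPdec, ENNReal.toReal_sum (fun p _ => measure_ne_top _ _),
      ENNReal.toReal_sum (fun p _ => measure_ne_top _ _), Finset.mul_sum]
    apply Finset.sum_congr rfl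
    intro p hp
    have hpmem := mem_auxPathsThru.mp hp
    have hspec := auxPaths_spec deg hfin e hdeg_e n p hpmem.1
    rw [hQdens n p hspec.1, hpmem.2.2]

lemma aux_markov_triple {Ω F : Type*} [MeasurableSpace Ω] [MeasurableSpace F]
    [MeasurableSingletonClass F]
    (P : Measure Ω) (deg : F → ℕ) (hfin : ∀ n, {x : F | deg x = n}.Finite)
    (e : F) (hdeg_e : deg e = 0) (hF0 : ∀ x : F, deg x = 0 → x = e)
    (Y : ℕ → Ω → F) (hY : ∀ k, Measurable (Y k))
    (had : ∀ k, ∀ᵐ ω ∂P, deg (Y k ω) = k)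
    (hY0 : ∀ᵐ ω ∂P, Y 0 ω = e)
    (hMarkov : ∀ (n : ℕ) (z : F) (path : ℕ → F),
      P ((⋂ i ∈ Finset.range (n + 1), {ω | Y i ω = path i}) ∩ {ω | Y (n + 1) ω = z})
          * P {ω | Y n ω = path n}
        = P ({ω | Y n ω = path n} ∩ {ω | Y (n + 1) ω = z})
          * P (⋂ i ∈ Finset.range (n + 1), {ω | Y i ω = path i}))
    (m n : ℕ) (hmn : m ≤ n) (x y z : F) (hx : deg x = m) (hy : deg y = n) :
    P ({ω | Y m ω = x} ∩ {ω | Y n ω = y} ∩ {ω | Y (n+1) ω = z}) * P {ω | Y n ω = y}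
      = P ({ω | Y n ω = y} ∩ {ω | Y (n+1) ω = z})
        * P ({ω | Y m ω = x} ∩ {ω | Y n ω = y}) := by
  classical
  have hconull : P {ω : Ω | Y 0 ω = e}ᶜ = 0 := hY0
  rcases Nat.eq_zero_or_pos m with hm0 | hm1
  · subst hm0
    have hxe : x = e := hF0 x hx
    subst hxe
    have h1 : P ({ω | Y 0 ω = x} ∩ {ω | Y n ω = y} ∩ {ω | Y (n+1) ω = z})
        = P ({ω | Y n ω = y} ∩ {ω | Y (n+1) ω = z}) := by
      rw [show {ω | Y 0 ω = x} ∩ {ω | Y n ω = y} ∩ {ω | Y (n+1) ω = z}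
          = ({ω | Y n ω = y} ∩ {ω | Y (n+1) ω = z}) ∩ {ω | Y 0 ω = x} by
        ext ω; simp only [Set.mem_inter_iff]; tauto]
      exact measure_inter_conull hconull
    have h2 : P ({ω | Y 0 ω = x} ∩ {ω | Y n ω = y}) = P {ω | Y n ω = y} := by
      rw [Set.inter_comm]
      exact measure_inter_conull hconull
    rw [h1, h2, mul_comm]
  · have hn1 : 1 ≤ n := le_trans hm1 hmn
    have hmz : MeasurableSet {ω : Ω | Y (n+1) ω = z} := (hY (n+1)) (measurableSet_singleton z)
    have htr := aux_two_point_decomp P deg hfin e hdeg_e hF0 Y hY had hY0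
      m n hmn hn1 x y hx hy (W := {ω | Y (n+1) ω = z}) hmz
    have hpr := aux_two_point_decomp P deg hfin e hdeg_e hF0 Y hY had hY0
      m n hmn hn1 x y hx hy (W := Set.univ) MeasurableSet.univ
    simp only [Set.inter_univ] at hpr
    rw [htr, hpr, Finset.sum_mul, Finset.mul_sum]
    apply Finset.sum_congr rfl
    intro p hp
    obtain ⟨hpmem, hpm, hpn⟩ := mem_auxPathsThru.mp hp
    obtain ⟨hspec1, hspec2⟩ := auxPaths_spec deg hfin e hdeg_e n p hpmem
    have hp0 : p 0 = e := hF0 (p 0) (hspec1 0 (by omega))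
    have hrange : (⋂ i ∈ Finset.range (n+1), {ω | Y i ω = p i})
        = {ω : Ω | Y 0 ω = e} ∩ ⋂ i ∈ Finset.Icc 1 n, {ω | Y i ω = p i} := by
      have : Finset.range (n+1) = insert 0 (Finset.Icc 1 n) := by
        ext i; simp only [Finset.mem_range, Finset.mem_insert, Finset.mem_Icc]; omega
      rw [this, Finset.set_biInter_insert, hp0]
    have hMk := hMarkov n z p
    rw [hrange, hpn] at hMk
    have hcyl1 : P (({ω : Ω | Y 0 ω = e} ∩ ⋂ i ∈ Finset.Icc 1 n, {ω | Y i ω = p i})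
          ∩ {ω | Y (n+1) ω = z})
        = P ((⋂ i ∈ Finset.Icc 1 n, {ω | Y i ω = p i}) ∩ {ω | Y (n+1) ω = z}) := by
      rw [show ({ω : Ω | Y 0 ω = e} ∩ ⋂ i ∈ Finset.Icc 1 n, {ω | Y i ω = p i})
            ∩ {ω | Y (n+1) ω = z}
          = ((⋂ i ∈ Finset.Icc 1 n, {ω | Y i ω = p i}) ∩ {ω | Y (n+1) ω = z})
            ∩ {ω : Ω | Y 0 ω = e} by
        ext ω; simp only [Set.mem_inter_iff]; tauto]
      exact measure_inter_conull hconull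
    have hcyl2 : P ({ω : Ω | Y 0 ω = e} ∩ ⋂ i ∈ Finset.Icc 1 n, {ω | Y i ω = p i})
        = P (⋂ i ∈ Finset.Icc 1 n, {ω | Y i ω = p i}) := by
      rw [Set.inter_comm]
      exact measure_inter_conull hconull
    rw [hcyl1, hcyl2] at hMk
    exact hMk

lemma aux_key_sum {Ω F : Type*} [MeasurableSpace Ω] [MeasurableSpace F]
    [MeasurableSingletonClass F]
    (P : Measure Ω) [IsProbabilityMeasure P]
    (deg : F → ℕ) (hfin : ∀ n, {x : F | deg x = n}.Finite)
    (e : F) (hdeg_e : deg e = 0) (hF0 : ∀ x : F, deg x = 0 → x = e)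
    (Y : ℕ → Ω → F) (hY : ∀ k, Measurable (Y k))
    (had : ∀ k, ∀ᵐ ω ∂P, deg (Y k ω) = k)
    (hY0 : ∀ᵐ ω ∂P, Y 0 ω = e)
    (hirr : ∀ (n : ℕ) (x : F), deg x = n → 0 < P {ω | Y n ω = x})
    (hMarkov : ∀ (n : ℕ) (z : F) (path : ℕ → F),
      P ((⋂ i ∈ Finset.range (n + 1), {ω | Y i ω = path i}) ∩ {ω | Y (n + 1) ω = z})
          * P {ω | Y n ω = path n}
        = P ({ω | Y n ω = path n} ∩ {ω | Y (n + 1) ω = z})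
          * P (⋂ i ∈ Finset.range (n + 1), {ω | Y i ω = path i}))
    (h : F → ℝ)
    (hharm : ∀ (n : ℕ) (x : F), deg x = n →
      h x = ∑ y ∈ (hfin (n + 1)).toFinset,
        ((P ({ω | Y n ω = x} ∩ {ω | Y (n + 1) ω = y})).toReal
          / (P {ω | Y n ω = x}).toReal) * h y)
    (x : F) (n : ℕ) (hn : deg x ≤ n) :
    ∑ y ∈ (hfin n).toFinset,
        (P ({ω | Y (deg x) ω = x} ∩ {ω | Y n ω = y})).toReal * h y
      = h x * (P {ω | Y (deg x) ω = x}).toReal := by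
  induction n, hn using Nat.le_induction with
  | base =>
    rw [Finset.sum_eq_single x]
    · rw [Set.inter_self, mul_comm]
    · intro y hy hyx
      have : {ω | Y (deg x) ω = x} ∩ {ω | Y (deg x) ω = y} = ∅ := by
        ext ω
        simp only [Set.mem_inter_iff, Set.mem_setOf_eq, Set.mem_empty_iff_false, iff_false]
        rintro ⟨h1, h2⟩
        exact hyx (h2.symm.trans h1)
      rw [this, measure_empty, ENNReal.toReal_zero, zero_mul]
    · intro hxmem
      exfalso
      exact hxmem (Set.Finite.mem_toFinset _ |>.mpr rfl)
  | succ n hmn ih =>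
    -- insert coordinate n
    have hins : ∀ z : F, P ({ω | Y (deg x) ω = x} ∩ {ω | Y (n+1) ω = z})
        = ∑ y ∈ (hfin n).toFinset,
          P ({ω | Y (deg x) ω = x} ∩ {ω | Y n ω = y} ∩ {ω | Y (n+1) ω = z}) := by
      intro z
      have hT : MeasurableSet ({ω | Y (deg x) ω = x} ∩ {ω | Y (n+1) ω = z}) :=
        ((hY (deg x)) (measurableSet_singleton x)).inter ((hY (n+1)) (measurableSet_singleton z))
      rw [aux_insert_coord P deg (hfin n) Y hY (had n) hT]
      apply Finset.sum_congr rfl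
      intro y _
      congr 1
      ext ω; simp only [Set.mem_inter_iff]; tauto
    calc ∑ z ∈ (hfin (n+1)).toFinset,
          (P ({ω | Y (deg x) ω = x} ∩ {ω | Y (n+1) ω = z})).toReal * h z
        = ∑ z ∈ (hfin (n+1)).toFinset, ∑ y ∈ (hfin n).toFinset,
            (P ({ω | Y (deg x) ω = x} ∩ {ω | Y n ω = y} ∩ {ω | Y (n+1) ω = z})).toReal
              * h z := by
          apply Finset.sum_congr rfl
          intro z _
          rw [hins z, ENNReal.toReal_sum (fun _ _ => measure_ne_top _ _), Finset.sum_mul]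
      _ = ∑ y ∈ (hfin n).toFinset, ∑ z ∈ (hfin (n+1)).toFinset,
            (P ({ω | Y (deg x) ω = x} ∩ {ω | Y n ω = y} ∩ {ω | Y (n+1) ω = z})).toReal
              * h z := Finset.sum_comm
      _ = ∑ y ∈ (hfin n).toFinset,
            (P ({ω | Y (deg x) ω = x} ∩ {ω | Y n ω = y})).toReal * h y := by
          apply Finset.sum_congr rfl
          intro y hy
          have hdy : deg y = n := (hfin n).mem_toFinset.mp hy
          have hPny : (P {ω | Y n ω = y}).toReal ≠ 0 :=
            (ENNReal.toReal_pos (hirr n y hdy).ne' (measure_ne_top _ _)).ne'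
          have hterm : ∀ z ∈ (hfin (n+1)).toFinset,
              (P ({ω | Y (deg x) ω = x} ∩ {ω | Y n ω = y} ∩ {ω | Y (n+1) ω = z})).toReal * h z
                = ((P ({ω | Y n ω = y} ∩ {ω | Y (n+1) ω = z})).toReal
                    / (P {ω | Y n ω = y}).toReal * h z)
                  * (P ({ω | Y (deg x) ω = x} ∩ {ω | Y n ω = y})).toReal := by
            intro z hz
            have hM := aux_markov_triple P deg hfin e hdeg_e hF0 Y hY had hY0 hMarkov
              (deg x) n hmn x y z rfl hdy
            have hM' := congrArg ENNReal.toReal hM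
            rw [ENNReal.toReal_mul, ENNReal.toReal_mul] at hM'
            have : (P ({ω | Y (deg x) ω = x} ∩ {ω | Y n ω = y} ∩ {ω | Y (n+1) ω = z})).toReal
                = (P ({ω | Y n ω = y} ∩ {ω | Y (n+1) ω = z})).toReal
                  / (P {ω | Y n ω = y}).toReal
                  * (P ({ω | Y (deg x) ω = x} ∩ {ω | Y n ω = y})).toReal := by
              field_simp
              linarith [hM']
            rw [this]
            ring
          rw [Finset.sum_congr rfl hterm, ← Finset.sum_mul, ← hharm n y hdy]
          exact mul_comm _ _
      _ = ∑ y ∈ (hfin n).toFinset,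
            (P ({ω | Y (deg x) ω = x} ∩ {ω | Y n ω = y})).toReal * h y := rfl
      _ = h x * (P {ω | Y (deg x) ω = x}).toReal := ih

/-- For a weakly irreducible CMC with Martin kernel K and Doob–Martin
limit Y_∞: for every nonnegative harmonic h with h(e) = 1 and every x with
h(x) > 0, h(x) = ∫ K(x,α) P_h^{Y_∞}(dα), where P_h is the h-transform. -/
theorem harmonic_function_boundary_representation
    {Ω F B : Type*} [MeasurableSpace Ω] [MeasurableSpace F] [MeasurableSingletonClass F]
    [MeasurableSpace B]
    (P : Measure Ω) [IsProbabilityMeasure P]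
    (deg : F → ℕ) (hfin : ∀ n, {x : F | deg x = n}.Finite)
    (e : F) (hdeg_e : deg e = 0) (hF0 : ∀ x : F, deg x = 0 → x = e)
    (Y : ℕ → Ω → F) (hY : ∀ n, Measurable (Y n))
    (hadapted : ∀ n, ∀ᵐ ω ∂P, deg (Y n ω) = n)
    (hY0 : ∀ᵐ ω ∂P, Y 0 ω = e)
    (hirr : ∀ (n : ℕ) (x : F), deg x = n → 0 < P {ω | Y n ω = x})
    (hMarkov : ∀ (n : ℕ) (z : F) (path : ℕ → F),
      P ((⋂ i ∈ Finset.range (n + 1), {ω | Y i ω = path i}) ∩ {ω | Y (n + 1) ω = z})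
          * P {ω | Y n ω = path n}
        = P ({ω | Y n ω = path n} ∩ {ω | Y (n + 1) ω = z})
          * P (⋂ i ∈ Finset.range (n + 1), {ω | Y i ω = path i}))
    -- the Martin kernel of P
    (K : F → F → ℝ)
    (hK : ∀ x y : F, deg x ≤ deg y →
      K x y = ((P ({ω | Y (deg x) ω = x} ∩ {ω | Y (deg y) ω = y})).toReal
                / (P {ω | Y (deg x) ω = x}).toReal)
              / (P {ω | Y (deg y) ω = y}).toReal)
    (hK0 : ∀ x y : F, ¬ deg x ≤ deg y → K x y = 0)
    -- h nonnegative harmonic, h(e)=1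
    (h : F → ℝ) (hpos : ∀ x, 0 ≤ h x) (he : h e = 1)
    (hharm : ∀ (n : ℕ) (x : F), deg x = n →
      h x = ∑ y ∈ (hfin (n + 1)).toFinset,
        ((P ({ω | Y n ω = x} ∩ {ω | Y (n + 1) ω = y})).toReal
          / (P {ω | Y n ω = x}).toReal) * h y)
    -- Q = P_h: h is the density of Q w.r.t. P on cylinder sets
    (Q : Measure Ω) [IsProbabilityMeasure Q]
    (hQ0 : Q {ω | Y 0 ω = e} = 1)
    (hQadapted : ∀ n, ∀ᵐ ω ∂Q, deg (Y n ω) = n)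
    (hQdens : ∀ (n : ℕ) (path : ℕ → F), (∀ i ≤ n, deg (path i) = i) →
      (Q (⋂ i ∈ Finset.Icc 1 n, {ω | Y i ω = path i})).toReal
        = h (path n) * (P (⋂ i ∈ Finset.Icc 1 n, {ω | Y i ω = path i})).toReal)
    -- boundary, Doob–Martin limit under Q, extended Martin kernel
    (Yinf : Ω → B) (hYinf : Measurable Yinf)
    (Kext : F → B → ℝ) (hKext : ∀ x, Measurable (Kext x))
    (hconv : ∀ x : F, ∀ᵐ ω ∂Q,
      Tendsto (fun n => K x (Y n ω)) atTop (nhds (Kext x (Yinf ω)))) :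
    ∀ x : F, 0 < h x → h x = ∫ α, Kext x α ∂(Q.map Yinf) := by
  classical
  intro x hx
  set m := deg x with hm
  have hCpos : 0 < (P {ω | Y m ω = x}).toReal :=
    ENNReal.toReal_pos (hirr m x rfl).ne' (measure_ne_top _ _)
  set C : ℝ := (P {ω | Y m ω = x}).toReal with hC
  -- bound on the kernel
  have hKbd : ∀ y : F, 0 ≤ K x y ∧ K x y ≤ 1 / C := by
    intro y
    by_cases hdxy : deg x ≤ deg y
    · rw [hK x y hdxy]
      have hPy : 0 < (P {ω | Y (deg y) ω = y}).toReal :=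
        ENNReal.toReal_pos (hirr (deg y) y rfl).ne' (measure_ne_top _ _)
      have hPxy : (P ({ω | Y (deg x) ω = x} ∩ {ω | Y (deg y) ω = y})).toReal
          ≤ (P {ω | Y (deg y) ω = y}).toReal := by
        apply ENNReal.toReal_mono (measure_ne_top _ _)
        exact measure_mono Set.inter_subset_right
      have hPxy0 : 0 ≤ (P ({ω | Y (deg x) ω = x} ∩ {ω | Y (deg y) ω = y})).toReal :=
        ENNReal.toReal_nonneg
      constructor
      · positivity
      · rw [div_div]
        rw [div_le_div_iff₀ (by positivity) (by positivity)]
        calc (P ({ω | Y (deg x) ω = x} ∩ {ω | Y (deg y) ω = y})).toReal * C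
            ≤ (P {ω | Y (deg y) ω = y}).toReal * C := by
              apply mul_le_mul_of_nonneg_right hPxy hCpos.le
          _ = 1 * (C * (P {ω | Y (deg y) ω = y}).toReal) := by ring
    · rw [hK0 x y hdxy]
      constructor
      · exact le_refl 0
      · positivity
  -- the integral of K x (Y n ·) against Q equals h x for n ≥ m
  have hIden : ∀ n : ℕ, m ≤ n → ∫ ω, K x (Y n ω) ∂Q = h x := by
    intro n hmn
    have hAmeas : ∀ y : F, MeasurableSet {ω : Ω | Y n ω = y} :=
      fun y => (hY n) (measurableSet_singleton y)
    set g : Ω → ℝ := fun ω => ∑ y ∈ (hfin n).toFinset,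
      Set.indicator {ω : Ω | Y n ω = y} (fun _ => K x y) ω with hg
    have hgm : Measurable g := by
      apply Finset.measurable_sum
      intro y _
      exact Measurable.indicator measurable_const (hAmeas y)
    have haeeq : (fun ω => K x (Y n ω)) =ᵐ[Q] g := by
      filter_upwards [hQadapted n] with ω hω
      rw [hg]
      simp only
      rw [Finset.sum_eq_single (Y n ω)]
      · rw [Set.indicator_of_mem (by exact rfl)]
      · intro y _ hyne
        apply Set.indicator_of_notMem
        simp only [Set.mem_setOf_eq]
        exact fun hc => hyne hc.symm
      · intro hmem
        exact absurd ((hfin n).mem_toFinset.mpr hω) hmem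
    have hgint : ∫ ω, g ω ∂Q = ∑ y ∈ (hfin n).toFinset, K x y * (Q {ω : Ω | Y n ω = y}).toReal := by
      rw [hg]
      rw [integral_finset_sum]
      · apply Finset.sum_congr rfl
        intro y _
        rw [integral_indicator_const _ (hAmeas y)]
        simp [mul_comm, measureReal_def]
      · intro y _
        apply Integrable.indicator (integrable_const _) (hAmeas y)
    have hstep : ∫ ω, K x (Y n ω) ∂Q
        = ∑ y ∈ (hfin n).toFinset, K x y * (Q {ω : Ω | Y n ω = y}).toReal := by
      rw [integral_congr_ae haeeq, hgint]
    rw [hstep]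
    have hterm : ∀ y ∈ (hfin n).toFinset,
        K x y * (Q {ω : Ω | Y n ω = y}).toReal
          = (P ({ω | Y m ω = x} ∩ {ω | Y n ω = y})).toReal * h y / C := by
      intro y hy
      have hdy : deg y = n := (hfin n).mem_toFinset.mp hy
      have hPy : 0 < (P {ω | Y n ω = y}).toReal :=
        ENNReal.toReal_pos (hirr n y hdy).ne' (measure_ne_top _ _)
      rw [aux_marginal P deg hfin e hdeg_e hF0 Y hY hadapted hY0 h he Q hQ0 hQadapted hQdens n y hdy]
      have hKxy := hK x y (by rw [hdy]; exact hmn)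
      rw [hdy] at hKxy
      rw [hKxy]
      rw [← hm, ← hC]
      field_simp
    rw [Finset.sum_congr rfl hterm, ← Finset.sum_div]
    rw [aux_key_sum P deg hfin e hdeg_e hF0 Y hY hadapted hY0 hirr hMarkov h hharm x n hmn]
    field_simp
    exact hC.symm
  -- dominated convergence
  have hmain : Tendsto (fun n => ∫ ω, K x (Y n ω) ∂Q) atTop
      (nhds (∫ ω, Kext x (Yinf ω) ∂Q)) := by
    apply tendsto_integral_of_dominated_convergence (fun _ => 1 / C)
    · intro n
      have hAmeas : ∀ y : F, MeasurableSet {ω : Ω | Y n ω = y} :=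
        fun y => (hY n) (measurableSet_singleton y)
      refine ⟨fun ω => ∑ y ∈ (hfin n).toFinset,
        Set.indicator {ω : Ω | Y n ω = y} (fun _ => K x y) ω, ?_, ?_⟩
      · apply Measurable.stronglyMeasurable
        apply Finset.measurable_sum
        intro y _
        exact Measurable.indicator measurable_const (hAmeas y)
      · filter_upwards [hQadapted n] with ω hω
        rw [Finset.sum_eq_single (Y n ω)]
        · rw [Set.indicator_of_mem (by exact rfl)]
        · intro y _ hyne
          apply Set.indicator_of_notMem
          simp only [Set.mem_setOf_eq]
          exact fun hc => hyne hc.symm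
        · intro hmem
          exact absurd ((hfin n).mem_toFinset.mpr hω) hmem
    · exact integrable_const _
    · intro n
      apply Filter.Eventually.of_forall
      intro ω
      rw [Real.norm_eq_abs, abs_of_nonneg (hKbd (Y n ω)).1]
      exact (hKbd (Y n ω)).2
    · exact hconv x
  have hconst : Tendsto (fun n => ∫ ω, K x (Y n ω) ∂Q) atTop (nhds (h x)) := by
    apply Tendsto.congr' _ tendsto_const_nhds
    filter_upwards [eventually_ge_atTop m] with n hn
    exact (hIden n hn).symm
  have : ∫ ω, Kext x (Yinf ω) ∂Q = h x := tendsto_nhds_unique hmain hconst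
  rw [integral_map hYinf.aemeasurable (hKext x).aestronglyMeasurable, this]
end

section
/- Let Y be a weakly irreducible CMC under P, and let P° be another probability measure on path space under which Y is a weakly irreducible CMC on the same family 𝔽 with the same cotransitions as under P. Then P° = P_h for the harmonic function h(x) = P°(Y_n = x)/P(Y_n = x) (x ∈ 𝔽_n), which is strictly positive with h(e) = 1. -/
/-!
Equal cotransitions say that `P°(Y_n = x, Y_{n+1} = y) = P(Y_n = x, Y_{n+1} = y) h(y)`. Summing
over the finitely many `y` of degree `n + 1` gives harmonicity of `h`, and the Markov property
of both laws propagates the density `h(Y_n)` from the one-dimensional marginals to all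
cylinder sets.
-/

open MeasureTheory

theorem eq_mul_div_of_div_eq_div {a b c d : ℝ} (h : a / b = c / d) (hb : b ≠ 0) :
    a = c * (b / d) := by
  rw [← mul_div_assoc, mul_div_right_comm, ← h, div_mul_cancel₀ a hb]

theorem biInter_range_add_one_eq_inter_biInter_Icc {α : Type*} (S : ℕ → Set α) (n : ℕ) :
    ⋂ i ∈ Finset.range (n + 1), S i = S 0 ∩ ⋂ i ∈ Finset.Icc 1 n, S i := by
  rw [Finset.range_eq_Ico, Finset.Ico_add_one_right_eq_Icc,
    ← Finset.insert_Icc_add_one_left_eq_Icc n.zero_le, Finset.set_biInter_insert, zero_add]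

section

variable {Ω F : Type*} [MeasurableSpace Ω]

theorem measureReal_mul_eq_of_measure_mul_eq {μ : Measure Ω} {a b c d : Set Ω}
    (h : μ a * μ b = μ c * μ d) : μ.real a * μ.real b = μ.real c * μ.real d := by
  simpa only [measureReal_def, ENNReal.toReal_mul] using congrArg ENNReal.toReal h

theorem measureReal_setOf_inter_eq_of_ae {μ : Measure Ω} {p : Ω → Prop} {s : Set Ω}
    (h : ∀ᵐ ω ∂μ, p ω) : μ.real ({ω | p ω} ∩ s) = μ.real s :=
  congrArg ENNReal.toReal (Measure.measure_inter_eq_of_ae h)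

theorem measureReal_setOf_eq_one_of_ae {μ : Measure Ω} [IsProbabilityMeasure μ] {p : Ω → Prop}
    (h : ∀ᵐ ω ∂μ, p ω) : μ.real {ω | p ω} = 1 := by
  simpa only [Set.inter_univ, probReal_univ] using
    measureReal_setOf_inter_eq_of_ae (s := Set.univ) h

theorem measureReal_eq_sum_inter_fiber [MeasurableSpace F] [MeasurableSingletonClass F]
    (μ : Measure Ω) [IsFiniteMeasure μ] {f : Ω → F} (hf : Measurable f) {s : Finset F}
    (hs : ∀ᵐ ω ∂μ, f ω ∈ s) (A : Set Ω) :
    μ.real A = ∑ y ∈ s, μ.real (A ∩ {ω | f ω = y}) := by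
  have hfiber : ∀ y ∈ s, MeasurableSet (f ⁻¹' {y}) := fun y _ =>
    hf (measurableSet_singleton y)
  calc μ.real A = (μ.restrict A).real (f ⁻¹' s) := by
        rw [measureReal_restrict_apply (hf s.measurableSet), measureReal_def, measureReal_def,
          Measure.measure_inter_eq_of_ae (t := f ⁻¹' s) hs]
    _ = ∑ y ∈ s, μ.real (A ∩ {ω | f ω = y}) := by
        rw [← sum_measureReal_preimage_singleton s hfiber]
        refine Finset.sum_congr rfl fun y hy => ?_
        rw [measureReal_restrict_apply (hfiber y hy), Set.inter_comm]
        rfl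

theorem measureReal_div_eq_sum_of_fiber_density [MeasurableSpace F] [MeasurableSingletonClass F]
    {P Q : Measure Ω} [IsFiniteMeasure Q] {f : Ω → F} (hf : Measurable f) {s : Finset F}
    (hs : ∀ᵐ ω ∂Q, f ω ∈ s) (A : Set Ω) (g : F → ℝ)
    (hg : ∀ y ∈ s, Q.real (A ∩ {ω | f ω = y}) = P.real (A ∩ {ω | f ω = y}) * g y) :
    Q.real A / P.real A = ∑ y ∈ s, P.real (A ∩ {ω | f ω = y}) / P.real A * g y := by
  rw [measureReal_eq_sum_inter_fiber Q hf hs A, Finset.sum_div]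
  refine Finset.sum_congr rfl fun y hy => ?_
  rw [hg y hy, mul_div_right_comm]

/-- `hPmarkov` and `hQmarkov` are the Markov property of `P` and `Q` along the events
`S n = {Y_n = x_n}`. -/
theorem measureReal_biInter_range_eq_mul_of_markov {P Q : Measure Ω} (S : ℕ → Set Ω)
    (g : ℕ → ℝ) (N : ℕ)
    (hQpos : ∀ n < N, Q.real (S n) ≠ 0)
    (hmarg : ∀ n ≤ N, Q.real (S n) = g n * P.real (S n))
    (hjoint : ∀ n < N, Q.real (S n ∩ S (n + 1)) = P.real (S n ∩ S (n + 1)) * g (n + 1))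
    (hPmarkov : ∀ n < N,
      P.real ((⋂ i ∈ Finset.range (n + 1), S i) ∩ S (n + 1)) * P.real (S n)
        = P.real (S n ∩ S (n + 1)) * P.real (⋂ i ∈ Finset.range (n + 1), S i))
    (hQmarkov : ∀ n < N,
      Q.real ((⋂ i ∈ Finset.range (n + 1), S i) ∩ S (n + 1)) * Q.real (S n)
        = Q.real (S n ∩ S (n + 1)) * Q.real (⋂ i ∈ Finset.range (n + 1), S i)) :
    Q.real (⋂ i ∈ Finset.range (N + 1), S i)
      = g N * P.real (⋂ i ∈ Finset.range (N + 1), S i) := by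
  suffices ∀ n ≤ N, Q.real (⋂ i ∈ Finset.range (n + 1), S i)
      = g n * P.real (⋂ i ∈ Finset.range (n + 1), S i) from this N le_rfl
  intro n hn
  induction n with
  | zero => simpa only [zero_add, Finset.range_one, Finset.set_biInter_singleton] using hmarg 0 hn
  | succ n ih =>
    have hlt : n < N := hn
    have hcyl : (⋂ i ∈ Finset.range (n + 1 + 1), S i)
        = (⋂ i ∈ Finset.range (n + 1), S i) ∩ S (n + 1) := by
      rw [Finset.range_add_one, Finset.set_biInter_insert, Set.inter_comm]
    rw [hcyl]
    apply mul_right_cancel₀ (hQpos n hlt)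
    rw [hQmarkov n hlt, hjoint n hlt, ih hlt.le, hmarg n hlt.le]
    linear_combination -g n * g (n + 1) * hPmarkov n hlt

end

theorem same_cotransitions_implies_h_transform_general
    {Ω F : Type*} [MeasurableSpace Ω] [MeasurableSpace F] [MeasurableSingletonClass F]
    (P : Measure Ω) [IsProbabilityMeasure P]
    (deg : F → ℕ) (hfin : ∀ n, {x : F | deg x = n}.Finite)
    (e : F) (hdeg_e : deg e = 0) (hF0 : ∀ x : F, deg x = 0 → x = e)
    (Y : ℕ → Ω → F) (hY : ∀ n, Measurable (Y n))
    (hY0 : ∀ᵐ ω ∂P, Y 0 ω = e)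
    (hirr : ∀ (n : ℕ) (x : F), deg x = n → 0 < P {ω | Y n ω = x})
    (hMarkov : ∀ (n : ℕ) (z : F) (path : ℕ → F),
      P ((⋂ i ∈ Finset.range (n + 1), {ω | Y i ω = path i}) ∩ {ω | Y (n + 1) ω = z})
          * P {ω | Y n ω = path n}
        = P ({ω | Y n ω = path n} ∩ {ω | Y (n + 1) ω = z})
          * P (⋂ i ∈ Finset.range (n + 1), {ω | Y i ω = path i}))
    -- P° : Y is a weakly irreducible CMC under Q := P° as well
    (Q : Measure Ω) [IsProbabilityMeasure Q]
    (hQ0 : ∀ᵐ ω ∂Q, Y 0 ω = e)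
    (hQadapted : ∀ n, ∀ᵐ ω ∂Q, deg (Y n ω) = n)
    (hQirr : ∀ (n : ℕ) (x : F), deg x = n → 0 < Q {ω | Y n ω = x})
    (hQMarkov : ∀ (n : ℕ) (z : F) (path : ℕ → F),
      Q ((⋂ i ∈ Finset.range (n + 1), {ω | Y i ω = path i}) ∩ {ω | Y (n + 1) ω = z})
          * Q {ω | Y n ω = path n}
        = Q ({ω | Y n ω = path n} ∩ {ω | Y (n + 1) ω = z})
          * Q (⋂ i ∈ Finset.range (n + 1), {ω | Y i ω = path i}))
    -- same cotransitions
    (hcot : ∀ (n : ℕ) (x y : F), deg x = n → deg y = n + 1 →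
      (Q ({ω | Y n ω = x} ∩ {ω | Y (n + 1) ω = y})).toReal
          / (Q {ω | Y (n + 1) ω = y}).toReal
        = (P ({ω | Y n ω = x} ∩ {ω | Y (n + 1) ω = y})).toReal
          / (P {ω | Y (n + 1) ω = y}).toReal)
    -- the candidate harmonic function h(x) = P°(Y_{deg x} = x)/P(Y_{deg x} = x)
    (h : F → ℝ)
    (hdef : ∀ x : F, h x = (Q {ω | Y (deg x) ω = x}).toReal
                            / (P {ω | Y (deg x) ω = x}).toReal) :
    (∀ x, 0 < h x) ∧ h e = 1
    ∧ (∀ (n : ℕ) (x : F), deg x = n →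
        h x = ∑ y ∈ (hfin (n + 1)).toFinset,
          ((P ({ω | Y n ω = x} ∩ {ω | Y (n + 1) ω = y})).toReal
            / (P {ω | Y n ω = x}).toReal) * h y)
    -- Q = P_h: h is the density of Q with respect to P on every cylinder set
    ∧ (∀ (n : ℕ) (path : ℕ → F), (∀ i ≤ n, deg (path i) = i) →
        (Q (⋂ i ∈ Finset.Icc 1 n, {ω | Y i ω = path i})).toReal
          = h (path n) * (P (⋂ i ∈ Finset.Icc 1 n, {ω | Y i ω = path i})).toReal) := by
  have hPpos : ∀ n x, deg x = n → 0 < P.real {ω | Y n ω = x} := fun n x hx =>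
    ENNReal.toReal_pos (hirr n x hx).ne' (measure_ne_top _ _)
  have hQpos : ∀ n x, deg x = n → 0 < Q.real {ω | Y n ω = x} := fun n x hx =>
    ENNReal.toReal_pos (hQirr n x hx).ne' (measure_ne_top _ _)
  have hh : ∀ n x, deg x = n → h x = Q.real {ω | Y n ω = x} / P.real {ω | Y n ω = x} := by
    rintro n x rfl
    exact hdef x
  have hmarg : ∀ n x, deg x = n → Q.real {ω | Y n ω = x} = h x * P.real {ω | Y n ω = x} :=
    fun n x hx => by rw [hh n x hx, div_mul_cancel₀ _ (hPpos n x hx).ne']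
  have hjoint : ∀ n x y, deg x = n → deg y = n + 1 →
      Q.real ({ω | Y n ω = x} ∩ {ω | Y (n + 1) ω = y})
        = P.real ({ω | Y n ω = x} ∩ {ω | Y (n + 1) ω = y}) * h y := fun n x y hx hy => by
    rw [hh (n + 1) y hy]
    exact eq_mul_div_of_div_eq_div (hcot n x y hx hy) (hQpos (n + 1) y hy).ne'
  refine ⟨fun x => hh _ x rfl ▸ div_pos (hQpos _ x rfl) (hPpos _ x rfl), ?_, ?_, ?_⟩
  · rw [hh 0 e hdeg_e, measureReal_setOf_eq_one_of_ae hQ0, measureReal_setOf_eq_one_of_ae hY0,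
      div_one]
  · intro n x hx
    rw [hh n x hx]
    refine measureReal_div_eq_sum_of_fiber_density (hY (n + 1)) ?_ _ h fun y hy =>
      hjoint n x y hx ((hfin (n + 1)).mem_toFinset.1 hy)
    filter_upwards [hQadapted (n + 1)] with ω hω using (hfin (n + 1)).mem_toFinset.2 hω
  · intro n path hpath
    have hcyl := measureReal_biInter_range_eq_mul_of_markov (P := P) (Q := Q)
      (fun i => {ω | Y i ω = path i}) (fun i => h (path i)) n
      (fun i hi => (hQpos i _ (hpath i hi.le)).ne') (fun i hi => hmarg i _ (hpath i hi))
      (fun i hi => hjoint i _ _ (hpath i hi.le) (hpath (i + 1) hi))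
      (fun i _ => measureReal_mul_eq_of_measure_mul_eq (hMarkov i _ path))
      (fun i _ => measureReal_mul_eq_of_measure_mul_eq (hQMarkov i _ path))
    rwa [biInter_range_add_one_eq_inter_biInter_Icc, hF0 _ (hpath 0 n.zero_le),
      measureReal_setOf_inter_eq_of_ae hY0, measureReal_setOf_inter_eq_of_ae hQ0] at hcyl

/-- If P° is another law under which Y is a weakly irreducible CMC on
the same family with the same cotransitions as under P, then P° = P_h for the
strictly positive harmonic function h(x) = P°(Y_n = x)/P(Y_n = x), h(e) = 1. -/
theorem same_cotransitions_implies_h_transform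
    {Ω F : Type*} [MeasurableSpace Ω] [MeasurableSpace F] [MeasurableSingletonClass F]
    (P : Measure Ω) [IsProbabilityMeasure P]
    (deg : F → ℕ) (hfin : ∀ n, {x : F | deg x = n}.Finite)
    (e : F) (hdeg_e : deg e = 0) (hF0 : ∀ x : F, deg x = 0 → x = e)
    (Y : ℕ → Ω → F) (hY : ∀ n, Measurable (Y n))
    (hadapted : ∀ n, ∀ᵐ ω ∂P, deg (Y n ω) = n)
    (hY0 : ∀ᵐ ω ∂P, Y 0 ω = e)
    (hirr : ∀ (n : ℕ) (x : F), deg x = n → 0 < P {ω | Y n ω = x})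
    (hMarkov : ∀ (n : ℕ) (z : F) (path : ℕ → F),
      P ((⋂ i ∈ Finset.range (n + 1), {ω | Y i ω = path i}) ∩ {ω | Y (n + 1) ω = z})
          * P {ω | Y n ω = path n}
        = P ({ω | Y n ω = path n} ∩ {ω | Y (n + 1) ω = z})
          * P (⋂ i ∈ Finset.range (n + 1), {ω | Y i ω = path i}))
    -- P° : Y is a weakly irreducible CMC under Q := P° as well
    (Q : Measure Ω) [IsProbabilityMeasure Q]
    (hQ0 : ∀ᵐ ω ∂Q, Y 0 ω = e)
    (hQadapted : ∀ n, ∀ᵐ ω ∂Q, deg (Y n ω) = n)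
    (hQirr : ∀ (n : ℕ) (x : F), deg x = n → 0 < Q {ω | Y n ω = x})
    (hQMarkov : ∀ (n : ℕ) (z : F) (path : ℕ → F),
      Q ((⋂ i ∈ Finset.range (n + 1), {ω | Y i ω = path i}) ∩ {ω | Y (n + 1) ω = z})
          * Q {ω | Y n ω = path n}
        = Q ({ω | Y n ω = path n} ∩ {ω | Y (n + 1) ω = z})
          * Q (⋂ i ∈ Finset.range (n + 1), {ω | Y i ω = path i}))
    -- same cotransitions
    (hcot : ∀ (n : ℕ) (x y : F), deg x = n → deg y = n + 1 →
      (Q ({ω | Y n ω = x} ∩ {ω | Y (n + 1) ω = y})).toReal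
          / (Q {ω | Y (n + 1) ω = y}).toReal
        = (P ({ω | Y n ω = x} ∩ {ω | Y (n + 1) ω = y})).toReal
          / (P {ω | Y (n + 1) ω = y}).toReal)
    -- the candidate harmonic function h(x) = P°(Y_{deg x} = x)/P(Y_{deg x} = x)
    (h : F → ℝ)
    (hdef : ∀ x : F, h x = (Q {ω | Y (deg x) ω = x}).toReal
                            / (P {ω | Y (deg x) ω = x}).toReal) :
    (∀ x, 0 < h x) ∧ h e = 1
    ∧ (∀ (n : ℕ) (x : F), deg x = n →
        h x = ∑ y ∈ (hfin (n + 1)).toFinset,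
          ((P ({ω | Y n ω = x} ∩ {ω | Y (n + 1) ω = y})).toReal
            / (P {ω | Y n ω = x}).toReal) * h y)
    -- Q = P_h: h is the density of Q with respect to P on every cylinder set
    ∧ (∀ (n : ℕ) (path : ℕ → F), (∀ i ≤ n, deg (path i) = i) →
        (Q (⋂ i ∈ Finset.Icc 1 n, {ω | Y i ω = path i})).toReal
          = h (path n) * (P (⋂ i ∈ Finset.Icc 1 n, {ω | Y i ω = path i})).toReal) :=
  same_cotransitions_implies_h_transform_general P deg hfin e hdeg_e hF0 Y hY hY0 hirr hMarkov Q hQ0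
    hQadapted hQirr hQMarkov hcot h hdef
end

section
/- For the uniform multinomial random walk Y on weak compositions with d parts, a sequence (y_n), y_n = (y_{n1},…,y_{nd}) ∈ 𝔽_{m_n} with m_n → ∞, converges in the Doob–Martin topology (i.e., K(x, y_n) converges in ℝ for every x) if and only if the sequences (y_{ni}/m_n)_n converge in ℝ for every i = 1,…,d. -/
open Filter

/-- The Martin kernel of the uniform multinomial random walk on weak compositions
with d parts: K(x,y) = multinomial(n−m; y−x) · d^m / multinomial(n; y) for
x ≤ y componentwise (with m = Σx, n = Σy, m ≤ n), and 0 otherwise. -/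
noncomputable def multinomialMartinKernel (d : ℕ) (x y : Fin d → ℕ) : ℝ :=
  if (∀ i, x i ≤ y i) ∧ ∑ i, x i ≤ ∑ i, y i then
    ((Nat.multinomial Finset.univ (fun i => y i - x i) : ℝ) * (d : ℝ) ^ (∑ i, x i))
      / (Nat.multinomial Finset.univ y : ℝ)
  else 0

lemma nat_key {d : ℕ} (x Y : Fin d → ℕ) (hxy : ∀ i, x i ≤ Y i)
    (h : ∑ i, x i ≤ ∑ i, Y i) :
    Nat.multinomial Finset.univ (fun i => Y i - x i) * ((∑ i, Y i).descFactorial (∑ i, x i))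
      = (∏ i, (Y i).descFactorial (x i)) * Nat.multinomial Finset.univ Y := by
  have hsum : ∑ i, (Y i - x i) = ∑ i, Y i - ∑ i, x i := by
    have h1 : ∑ i, (Y i - x i) + ∑ i, x i = ∑ i, Y i := by
      rw [← Finset.sum_add_distrib]
      exact Finset.sum_congr rfl (fun i _ => Nat.sub_add_cancel (hxy i))
    omega
  have hP : 0 < ∏ i, Nat.factorial (Y i - x i) := Finset.prod_pos (fun i _ => Nat.factorial_pos _)
  apply Nat.eq_of_mul_eq_mul_left hP
  calc (∏ i, Nat.factorial (Y i - x i)) *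
        (Nat.multinomial Finset.univ (fun i => Y i - x i) * ((∑ i, Y i).descFactorial (∑ i, x i)))
      = ((∏ i, Nat.factorial (Y i - x i)) * Nat.multinomial Finset.univ (fun i => Y i - x i)) *
          ((∑ i, Y i).descFactorial (∑ i, x i)) := by ring
    _ = Nat.factorial (∑ i, (Y i - x i)) * ((∑ i, Y i).descFactorial (∑ i, x i)) := by
          rw [Nat.multinomial_spec]
    _ = Nat.factorial (∑ i, Y i - ∑ i, x i) * ((∑ i, Y i).descFactorial (∑ i, x i)) := by rw [hsum]
    _ = Nat.factorial (∑ i, Y i) := Nat.factorial_mul_descFactorial h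
    _ = (∏ i, Nat.factorial (Y i)) * Nat.multinomial Finset.univ Y := (Nat.multinomial_spec _ _).symm
    _ = (∏ i, (Nat.factorial (Y i - x i) * (Y i).descFactorial (x i))) * Nat.multinomial Finset.univ Y := by
          rw [Finset.prod_congr rfl (fun i _ => (Nat.factorial_mul_descFactorial (hxy i)).symm)]
    _ = (∏ i, Nat.factorial (Y i - x i)) *
          ((∏ i, (Y i).descFactorial (x i)) * Nat.multinomial Finset.univ Y) := by
          rw [Finset.prod_mul_distrib]; ring

lemma kernel_eq {d : ℕ} (x Y : Fin d → ℕ) (h : ∑ i, x i ≤ ∑ i, Y i) :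
    multinomialMartinKernel d x Y =
      (d : ℝ) ^ (∑ i, x i) * (∏ i, ((Y i).descFactorial (x i) : ℝ))
        / (((∑ i, Y i).descFactorial (∑ i, x i) : ℝ)) := by
  by_cases hxy : ∀ i, x i ≤ Y i
  · rw [multinomialMartinKernel, if_pos ⟨hxy, h⟩]
    have hD : (((∑ i, Y i).descFactorial (∑ i, x i) : ℕ) : ℝ) ≠ 0 := by
      have : (∑ i, Y i).descFactorial (∑ i, x i) ≠ 0 := by
        rw [Ne, Nat.descFactorial_eq_zero_iff_lt]; omega
      exact_mod_cast this
    have hM : ((Nat.multinomial Finset.univ Y : ℕ) : ℝ) ≠ 0 := by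
      exact_mod_cast (Nat.multinomial_pos _ _).ne'
    rw [div_eq_div_iff hM hD]
    have key : ((Nat.multinomial Finset.univ (fun i => Y i - x i) : ℕ) : ℝ) *
        (((∑ i, Y i).descFactorial (∑ i, x i) : ℕ) : ℝ)
        = ((∏ i, (Y i).descFactorial (x i) : ℕ) : ℝ) *
          ((Nat.multinomial Finset.univ Y : ℕ) : ℝ) := by
      exact_mod_cast nat_key x Y hxy h
    push_cast at key ⊢
    linear_combination (d : ℝ) ^ (∑ i, x i) * key
  · rw [multinomialMartinKernel, if_neg (by tauto)]
    push_neg at hxy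
    obtain ⟨i, hi⟩ := hxy
    have : ((Y i).descFactorial (x i) : ℝ) = 0 := by
      rw [Nat.cast_eq_zero, Nat.descFactorial_eq_zero_iff_lt]; omega
    rw [Finset.prod_eq_zero (Finset.mem_univ i) this]
    simp

lemma tendsto_desc {y m : ℕ → ℕ} {L : ℝ} (hm : Tendsto m atTop atTop)
    (hy : Tendsto (fun n => (y n : ℝ) / (m n : ℝ)) atTop (nhds L)) (k : ℕ) :
    Tendsto (fun n => ((y n).descFactorial k : ℝ) / (m n : ℝ) ^ k) atTop (nhds (L ^ k)) := by
  induction k with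
  | zero => simpa using (tendsto_const_nhds : Tendsto (fun _ : ℕ => (1 : ℝ)) atTop (nhds 1))
  | succ k ih =>
    have hm' : Tendsto (fun n => (m n : ℝ)) atTop atTop :=
      tendsto_natCast_atTop_atTop.comp hm
    have hk0 : Tendsto (fun n => (k : ℝ) / (m n : ℝ)) atTop (nhds 0) :=
      tendsto_const_nhds.div_atTop hm'
    have hmpos : ∀ᶠ n in atTop, (0 : ℝ) < (m n : ℝ) := by
      filter_upwards [hm.eventually (eventually_ge_atTop 1)] with n hn
      exact_mod_cast hn
    have h1 : Tendsto (fun n => ((y n - k : ℕ) : ℝ) / (m n : ℝ)) atTop (nhds L) := by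
      have hlow : Tendsto (fun n => (y n : ℝ) / (m n : ℝ) - (k : ℝ) / (m n : ℝ)) atTop
          (nhds (L - 0)) := hy.sub hk0
      rw [sub_zero] at hlow
      refine tendsto_of_tendsto_of_tendsto_of_le_of_le' hlow hy ?_ ?_
      · filter_upwards [hmpos] with n hn
        rw [div_sub_div_same]
        apply div_le_div_of_nonneg_right ?_ hn.le
        rcases le_or_gt k (y n) with h | h
        · rw [Nat.cast_sub h]
        · have h0 : y n - k = 0 := by omega
          rw [h0]
          have : (y n : ℝ) ≤ (k : ℝ) := by exact_mod_cast h.le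
          simp
          linarith
      · filter_upwards [hmpos] with n hn
        apply div_le_div_of_nonneg_right ?_ hn.le
        have : y n - k ≤ y n := Nat.sub_le _ _
        exact_mod_cast this
    have heq : ∀ n, ((y n).descFactorial (k + 1) : ℝ) / (m n : ℝ) ^ (k + 1)
        = ((y n - k : ℕ) : ℝ) / (m n : ℝ) * (((y n).descFactorial k : ℝ) / (m n : ℝ) ^ k) := by
      intro n
      rw [Nat.descFactorial_succ, div_mul_div_comm, pow_succ]
      push_cast
      ring
    refine Tendsto.congr (fun n => (heq n).symm) ?_
    have := h1.mul ih
    rw [pow_succ]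
    simpa [mul_comm] using this

/-- A sequence (y_n) with y_n ∈ 𝔽_{m_n}, m_n → ∞, converges in the
Doob–Martin topology (K(x,y_n) converges for every x) iff the relative frequencies
y_{ni}/m_n converge for every i = 1,…,d. -/
theorem multinomial_walk_doob_martin_convergence
    (d : ℕ) (hd : 0 < d)
    (y : ℕ → Fin d → ℕ) (m : ℕ → ℕ)
    (hdeg : ∀ n, ∑ i, y n i = m n)
    (hm : Tendsto m atTop atTop) :
    (∀ x : Fin d → ℕ, ∃ L : ℝ,
        Tendsto (fun n => multinomialMartinKernel d x (y n)) atTop (nhds L))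
      ↔ (∀ i : Fin d, ∃ L : ℝ,
        Tendsto (fun n => (y n i : ℝ) / (m n : ℝ)) atTop (nhds L)) := by
  constructor
  · intro h j
    classical
    set x : Fin d → ℕ := fun i => if i = j then 1 else 0 with hx
    have hsx : ∑ i, x i = 1 := by simp [hx]
    obtain ⟨L, hL⟩ := h x
    refine ⟨L / d, ?_⟩
    have hdne : (d : ℝ) ≠ 0 := by positivity
    have heq : ∀ᶠ n in atTop, multinomialMartinKernel d x (y n) / d
        = (y n j : ℝ) / (m n : ℝ) := by
      filter_upwards [hm.eventually (eventually_ge_atTop 1)] with n hn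
      have hle : ∑ i, x i ≤ ∑ i, y n i := by rw [hsx, hdeg n]; exact hn
      rw [kernel_eq x (y n) hle, hsx, hdeg n]
      have hprod : (∏ i, ((y n i).descFactorial (x i) : ℝ)) = (y n j : ℝ) := by
        rw [show (fun i => ((y n i).descFactorial (x i) : ℝ))
            = fun i => if i = j then (y n i : ℝ) else 1 from ?_]
        · exact Fintype.prod_ite_eq' j _
        · funext i
          by_cases hij : i = j <;> simp [hx, hij]
      rw [hprod, Nat.descFactorial_one, pow_one]
      field_simp
    exact Tendsto.congr' heq (hL.div_const _)
  · intro h x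
    choose L hL using h
    set s := ∑ i, x i with hs
    refine ⟨(d : ℝ) ^ s * ∏ i, (L i) ^ (x i), ?_⟩
    have hprod : Tendsto (fun n => ∏ i, (((y n i).descFactorial (x i) : ℝ) / (m n : ℝ) ^ (x i)))
        atTop (nhds (∏ i, (L i) ^ (x i))) :=
      tendsto_finset_prod _ (fun i _ => tendsto_desc hm (hL i) (x i))
    have hone : Tendsto (fun n => ((m n).descFactorial s : ℝ) / (m n : ℝ) ^ s) atTop (nhds 1) := by
      have hself : Tendsto (fun n => (m n : ℝ) / (m n : ℝ)) atTop (nhds 1) := by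
        refine Tendsto.congr' ?_ tendsto_const_nhds
        filter_upwards [hm.eventually (eventually_ge_atTop 1)] with n hn
        have : (m n : ℝ) ≠ 0 := Nat.cast_ne_zero.mpr (by omega)
        exact (div_self this).symm
      simpa using tendsto_desc hm hself s
    have hinv : Tendsto (fun n => (m n : ℝ) ^ s / ((m n).descFactorial s : ℝ)) atTop (nhds 1) := by
      have := hone.inv₀ one_ne_zero
      simpa [inv_div] using this
    have hmain := (hprod.const_mul ((d : ℝ) ^ s)).mul hinv
    rw [mul_one] at hmain
    refine Tendsto.congr' ?_ hmain
    filter_upwards [hm.eventually (eventually_ge_atTop (max s 1))] with n hn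
    have hs1 : s ≤ m n := le_trans (le_max_left _ _) hn
    have hn1 : 1 ≤ m n := le_trans (le_max_right _ _) hn
    have hle : ∑ i, x i ≤ ∑ i, y n i := by rw [← hs, hdeg n]; exact hs1
    have hmne : (m n : ℝ) ≠ 0 := by
      have : (0 : ℕ) < m n := hn1
      exact_mod_cast this.ne'
    have hDne : (((m n).descFactorial s : ℕ) : ℝ) ≠ 0 := by
      have : (m n).descFactorial s ≠ 0 := by
        rw [Ne, Nat.descFactorial_eq_zero_iff_lt]; omega
      exact_mod_cast this
    rw [kernel_eq x (y n) hle, ← hs, hdeg n]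
    rw [Finset.prod_div_distrib, Finset.prod_pow_eq_pow_sum, ← hs]
    field_simp
end

section
/- For the uniform multinomial random walk Y on weak compositions with d parts, the extended Martin kernel on the boundary (the probability simplex S(d)) is K(x, α) = d^m · ∏_{i=1}^d α_i^{x_i} for x = (x_1,…,x_d) ∈ 𝔽_m and α ∈ S(d); equivalently, if y_n ∈ 𝔽_{m_n}, m_n → ∞, and y_{ni}/m_n → α_i for each i, then K(x, y_n) → d^m ∏_i α_i^{x_i}. -/
/-! In falling factorials the kernel is `K(x, y) = d^m ∏ᵢ (yᵢ)_{xᵢ} / (|y|)_m` (with `m = |x|`).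
Dividing numerator and denominator by `|y|^m`, each `(yᵢ)_{xᵢ} / |y|^{xᵢ}` is a product of
`xᵢ` factors `(yᵢ - j) / |y| → αᵢ`, while `(|y|)_m / |y|^m → 1`. -/

open Filter

open Finset

theorem Nat.multinomial_sub_mul_descFactorial {ι : Type*} (s : Finset ι) {x y : ι → ℕ}
    (hxy : ∀ i ∈ s, x i ≤ y i) :
    Nat.multinomial s (fun i => y i - x i) * (∑ i ∈ s, y i).descFactorial (∑ i ∈ s, x i)
      = Nat.multinomial s y * ∏ i ∈ s, (y i).descFactorial (x i) := by
  have hsum : ∑ i ∈ s, (y i - x i) = ∑ i ∈ s, y i - ∑ i ∈ s, x i := by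
    rw [eq_tsub_iff_add_eq_of_le (sum_le_sum hxy), ← sum_add_distrib]
    exact sum_congr rfl fun i hi => Nat.sub_add_cancel (hxy i hi)
  have hprod : ∏ i ∈ s, (y i).factorial
      = (∏ i ∈ s, (y i - x i).factorial) * ∏ i ∈ s, (y i).descFactorial (x i) := by
    rw [← prod_mul_distrib]
    exact prod_congr rfl fun i hi => (Nat.factorial_mul_descFactorial (hxy i hi)).symm
  refine Nat.eq_of_mul_eq_mul_left (s.prod_pos fun i _ => (y i - x i).factorial_pos) ?_
  calc (∏ i ∈ s, (y i - x i).factorial) * (Nat.multinomial s (fun i => y i - x i)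
          * (∑ i ∈ s, y i).descFactorial (∑ i ∈ s, x i))
      = (∑ i ∈ s, y i - ∑ i ∈ s, x i).factorial
          * (∑ i ∈ s, y i).descFactorial (∑ i ∈ s, x i) := by
        rw [← mul_assoc, Nat.multinomial_spec, hsum]
    _ = (∏ i ∈ s, (y i).factorial) * Nat.multinomial s y := by
        rw [Nat.factorial_mul_descFactorial (sum_le_sum hxy), Nat.multinomial_spec]
    _ = (∏ i ∈ s, (y i - x i).factorial)
          * (Nat.multinomial s y * ∏ i ∈ s, (y i).descFactorial (x i)) := by
        rw [hprod]; ring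

/-- Both sides vanish when `x ≰ y`, the right one because some `(y i).descFactorial (x i)`
is zero. -/
theorem multinomialMartinKernel_eq_descFactorial (d : ℕ) (x y : Fin d → ℕ) :
    multinomialMartinKernel d x y
      = (d : ℝ) ^ (∑ i, x i) * (∏ i, ((y i).descFactorial (x i) : ℝ))
          / ((∑ i, y i).descFactorial (∑ i, x i) : ℝ) := by
  by_cases hxy : ∀ i, x i ≤ y i
  · have hdesc : ((∑ i, y i).descFactorial (∑ i, x i) : ℝ) ≠ 0 := by
      exact_mod_cast (Nat.descFactorial_pos.2 (sum_le_sum fun i _ => hxy i)).ne'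
    have hmult : (Nat.multinomial univ y : ℝ) ≠ 0 := by
      exact_mod_cast (Nat.multinomial_pos _ _).ne'
    rw [multinomialMartinKernel, if_pos ⟨hxy, sum_le_sum fun i _ => hxy i⟩,
      div_eq_div_iff hmult hdesc]
    have key := Nat.multinomial_sub_mul_descFactorial univ fun i _ => hxy i
    rw [← Nat.cast_inj (R := ℝ)] at key
    push_cast at key
    linear_combination (d : ℝ) ^ (∑ i, x i) * key
  · obtain ⟨i, hi⟩ := not_forall.1 hxy
    have hzero : ((y i).descFactorial (x i) : ℝ) = 0 := by
      exact_mod_cast Nat.descFactorial_eq_zero_iff_lt.2 (not_le.1 hi)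
    rw [multinomialMartinKernel, if_neg fun h => hxy h.1, prod_eq_zero (mem_univ i) hzero]
    simp

theorem tendsto_descFactorial_div_pow {a m : ℕ → ℕ} {α : ℝ} (hm : Tendsto m atTop atTop)
    (ha : Tendsto (fun n => (a n : ℝ) / m n) atTop (nhds α)) (k : ℕ) :
    Tendsto (fun n => ((a n).descFactorial k : ℝ) / (m n : ℝ) ^ k) atTop (nhds (α ^ k)) := by
  have hinv : Tendsto (fun n => ((m n : ℝ))⁻¹) atTop (nhds 0) :=
    (tendsto_natCast_atTop_atTop.comp hm).inv_tendsto_atTop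
  have hfactor : ∀ j : ℕ, Tendsto (fun n => ((a n : ℝ) - j) / m n) atTop (nhds α) := by
    intro j
    simpa using (ha.sub (hinv.const_mul (j : ℝ))).congr fun n => by ring
  have hprod := tendsto_finsetProd (range k) fun j _ => hfactor j
  rw [prod_const, card_range] at hprod
  refine hprod.congr fun n => ?_
  rw [← descPochhammer_eval_eq_descFactorial, descPochhammer_eval_eq_prod_range,
    prod_div_distrib, prod_const, card_range]

theorem multinomial_walk_extended_martin_kernel_general
    (d : ℕ)
    (y : ℕ → Fin d → ℕ) (m : ℕ → ℕ)
    (hdeg : ∀ n, ∑ i, y n i = m n)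
    (hm : Tendsto m atTop atTop)
    (α : Fin d → ℝ)
    (hfreq : ∀ i, Tendsto (fun n => (y n i : ℝ) / (m n : ℝ)) atTop (nhds (α i)))
    (x : Fin d → ℕ) :
    Tendsto (fun n => multinomialMartinKernel d x (y n)) atTop
      (nhds ((d : ℝ) ^ (∑ i, x i) * ∏ i, α i ^ x i)) := by
  set M := ∑ i, x i
  have hm_pos : ∀ᶠ n in atTop, 0 < m n := hm.eventually_gt_atTop 0
  have hnum : Tendsto (fun n => ∏ i, ((y n i).descFactorial (x i) : ℝ) / (m n : ℝ) ^ x i)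
      atTop (nhds (∏ i, α i ^ x i)) :=
    tendsto_finsetProd _ fun i _ => tendsto_descFactorial_div_pow hm (hfreq i) (x i)
  have hden : Tendsto (fun n => ((m n).descFactorial M : ℝ) / (m n : ℝ) ^ M) atTop (nhds 1) := by
    have hself : Tendsto (fun n => (m n : ℝ) / m n) atTop (nhds 1) :=
      tendsto_const_nhds.congr' <| hm_pos.mono fun n hn => (div_self (by positivity)).symm
    simpa using tendsto_descFactorial_div_pow hm hself M
  have hlim := (hnum.const_mul ((d : ℝ) ^ M)).div hden one_ne_zero
  rw [div_one] at hlim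
  refine hlim.congr' (hm_pos.mono fun n hn => ?_)
  have hpow : (m n : ℝ) ^ M ≠ 0 := by positivity
  simp only [Pi.div_apply]
  rw [multinomialMartinKernel_eq_descFactorial, hdeg, prod_div_distrib, prod_pow_eq_pow_sum,
    ← mul_div_assoc, div_div_div_cancel_right₀ hpow]

/-- The extended Martin kernel on the boundary simplex S(d) is
K(x,α) = d^m ∏ α_i^{x_i}: if y_n ∈ 𝔽_{m_n}, m_n → ∞ and y_{ni}/m_n → α_i for each
i with α ∈ S(d), then K(x,y_n) → d^m ∏_i α_i^{x_i}. -/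
theorem multinomial_walk_extended_martin_kernel
    (d : ℕ) (hd : 0 < d)
    (y : ℕ → Fin d → ℕ) (m : ℕ → ℕ)
    (hdeg : ∀ n, ∑ i, y n i = m n)
    (hm : Tendsto m atTop atTop)
    (α : Fin d → ℝ) (hα : ∀ i, 0 ≤ α i) (hαsum : ∑ i, α i = 1)
    (hfreq : ∀ i, Tendsto (fun n => (y n i : ℝ) / (m n : ℝ)) atTop (nhds (α i)))
    (x : Fin d → ℕ) :
    Tendsto (fun n => multinomialMartinKernel d x (y n)) atTop
      (nhds ((d : ℝ) ^ (∑ i, x i) * ∏ i, α i ^ x i)) :=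
  multinomial_walk_extended_martin_kernel_general d y m hdeg hm α hfreq x
end

section
/- Let X = (X_n)_{n≥1} be an exchangeable sequence with values in the finite set E = {1,…,d}, and define Y_n = (#{1 ≤ i ≤ n : X_i = k})_{k=1,…,d} ∈ ℕ₀^d. Then Y = (Y_n)_{n≥0} is a Markov chain. -/
/-!
By exchangeability, the probability that `(X 0, …, X (n-1))` equals a word `x`, also jointly with
any event that is symmetric in the first `n` coordinates (such as `Y (n+1) = z`), only depends on
the letter counts of `x`. An event determined by `Y 1, …, Y n` is a finite union of such cylinders,
all of whose words have the counts `Y n`; hence both `P (A ∩ {Y (n+1) = z})` and `P A` are the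
number of words times a constant depending on `Y n` alone, and their ratio is the same for
`A = {Y 1 = y 1, …, Y n = y n}` as for `A = {Y n = y n}`.
-/

open MeasureTheory Finset

namespace Equiv.Perm

variable {n : ℕ}

def extendToNat (σ : Perm (Fin n)) : Perm ℕ := σ.viaFintypeEmbedding Fin.valEmbedding

@[simp]
theorem extendToNat_apply_val (σ : Perm (Fin n)) (i : Fin n) : σ.extendToNat i = σ i :=
  viaFintypeEmbedding_apply_image σ Fin.valEmbedding i

theorem extendToNat_apply_of_le (σ : Perm (Fin n)) {k : ℕ} (hk : n ≤ k) : σ.extendToNat k = k :=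
  viaFintypeEmbedding_apply_notMem_range σ Fin.valEmbedding (by simpa using hk)

theorem extendToNat_lt_iff (σ : Perm (Fin n)) {m k : ℕ} (hnm : n ≤ m) :
    σ.extendToNat k < m ↔ k < m := by
  by_cases hk : k < n
  · have h : σ.extendToNat k = σ ⟨k, hk⟩ := σ.extendToNat_apply_val ⟨k, hk⟩
    omega
  · rw [σ.extendToNat_apply_of_le (not_lt.mp hk)]

theorem finite_support_extendToNat (σ : Perm (Fin n)) : {k | σ.extendToNat k ≠ k}.Finite :=
  (Set.finite_Iio n).subset fun _ hk => not_le.mp fun hnk => hk (σ.extendToNat_apply_of_le hnk)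

end Equiv.Perm

theorem exists_perm_comp_eq_of_card_fiber_eq {ι α : Type*} [Fintype ι] [DecidableEq α]
    {x y : ι → α} (h : ∀ a, #{i | x i = a} = #{i | y i = a}) : ∃ σ : Equiv.Perm ι, x ∘ σ = y := by
  classical
  refine ⟨Equiv.ofFiberEquiv fun a => Fintype.equivOfCardEq ?_, funext (Equiv.ofFiberEquiv_map _)⟩
  rw [Fintype.card_subtype, Fintype.card_subtype, h]

theorem Finset.sum_mul_sum_eq_of_forall {ι R : Type*} [CommSemiring R] {s t : Finset ι}
    {g h : ι → R} (hst : ∀ x ∈ s, ∀ y ∈ t, g x = g y ∧ h x = h y) :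
    (∑ x ∈ s, g x) * ∑ y ∈ t, h y = (∑ y ∈ t, g y) * ∑ x ∈ s, h x := by
  rw [sum_mul_sum, sum_mul_sum]
  conv_rhs => rw [sum_comm]
  refine sum_congr rfl fun x hx => sum_congr rfl fun y hy => ?_
  obtain ⟨hg, hh⟩ := hst x hx y hy
  rw [hg, hh]

theorem MeasureTheory.measure_preimage_finset_inter_eq_sum {β γ : Type*} [MeasurableSpace β]
    [MeasurableSpace γ] [MeasurableSingletonClass γ] {μ : Measure β} {f : β → γ}
    (hf : Measurable f) (s : Finset γ) (C : Set β) :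
    μ (f ⁻¹' s ∩ C) = ∑ x ∈ s, μ (f ⁻¹' {x} ∩ C) := by
  rw [← Measure.restrict_apply (hf s.measurableSet),
    ← sum_measure_preimage_singleton s fun x _ => hf (measurableSet_singleton x)]
  exact sum_congr rfl fun x _ => Measure.restrict_apply (hf (measurableSet_singleton x))

theorem Set.preimage_image_eq_of_forall {β γ : Type*} {f : β → γ} {S : Set β}
    (hS : ∀ a b, f a = f b → a ∈ S → b ∈ S) : f ⁻¹' (f '' S) = S :=
  Set.Subset.antisymm (fun b ⟨a, ha, hab⟩ => hS a b hab ha) (Set.subset_preimage_image f S)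

section PathSpace

variable {α : Type*}

def prefixWord (n : ℕ) (f : ℕ → α) : Fin n → α := fun i => f i

def empiricalCount [DecidableEq α] (f : ℕ → α) (m : ℕ) (a : α) : ℕ := #{k ∈ range m | f k = a}

theorem prefixWord_comp_extendToNat {n : ℕ} (f : ℕ → α) (σ : Equiv.Perm (Fin n)) :
    prefixWord n (f ∘ σ.extendToNat) = prefixWord n f ∘ σ := by
  funext i
  simp [prefixWord]

variable [DecidableEq α]

theorem empiricalCount_congr {f g : ℕ → α} {m : ℕ} (h : ∀ k < m, f k = g k) :
    empiricalCount f m = empiricalCount g m := by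
  funext a
  unfold empiricalCount
  rw [filter_congr fun k hk => by rw [h k (mem_range.mp hk)]]

theorem empiricalCount_comp_extendToNat {n m : ℕ} (hnm : n ≤ m) (f : ℕ → α)
    (σ : Equiv.Perm (Fin n)) : empiricalCount (f ∘ σ.extendToNat) m = empiricalCount f m := by
  funext a
  refine card_nbij' σ.extendToNat σ.extendToNat.symm ?_ ?_ (fun _ _ => by simp) (fun _ _ => by simp)
  · intro k hk
    simp_all [σ.extendToNat_lt_iff hnm]
  · intro k hk
    have := σ.extendToNat_lt_iff hnm (k := σ.extendToNat.symm k)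
    simp_all

theorem empiricalCount_eq_card_prefixWord (f : ℕ → α) (n : ℕ) (a : α) :
    empiricalCount f n a = #{i | prefixWord n f i = a} := by
  rw [empiricalCount, ← Nat.Iio_eq_range, ← Fin.map_valEmbedding_univ, filter_map, card_map]
  rfl

end PathSpace

section Exchangeable

variable {α : Type*} [MeasurableSpace α]

def IsExchangeable (μ : Measure (ℕ → α)) : Prop :=
  ∀ τ : Equiv.Perm ℕ, {i | τ i ≠ i}.Finite → μ.map (fun f => f ∘ τ) = μ

theorem measurable_prefixWord (n : ℕ) : Measurable (prefixWord (α := α) n) :=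
  measurable_pi_lambda _ fun i => measurable_pi_apply (i : ℕ)

variable [MeasurableSingletonClass α] {μ : Measure (ℕ → α)} {n : ℕ}

theorem IsExchangeable.measure_prefixWord_comp_perm_inter (hμ : IsExchangeable μ)
    (x : Fin n → α) (σ : Equiv.Perm (Fin n)) {B : Set (ℕ → α)} (hB : MeasurableSet B)
    (hB_symm : ∀ τ : Equiv.Perm (Fin n), (fun f => f ∘ τ.extendToNat) ⁻¹' B = B) :
    μ (prefixWord n ⁻¹' {x ∘ σ} ∩ B) = μ (prefixWord n ⁻¹' {x} ∩ B) := by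
  have hmeas : Measurable fun f : ℕ → α => f ∘ σ⁻¹.extendToNat :=
    measurable_pi_lambda _ fun _ => measurable_pi_apply _
  have hcyl : (fun f => f ∘ σ⁻¹.extendToNat) ⁻¹' (prefixWord n ⁻¹' {x}) =
      prefixWord n ⁻¹' {x ∘ σ} := by
    ext f
    simp only [Set.mem_preimage, Set.mem_singleton_iff, prefixWord_comp_extendToNat,
      Equiv.Perm.inv_def, Equiv.comp_symm_eq]
  conv_rhs => rw [← hμ _ σ⁻¹.finite_support_extendToNat]
  rw [Measure.map_apply hmeas ((measurable_prefixWord n (measurableSet_singleton x)).inter hB),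
    Set.preimage_inter, hcyl, hB_symm]

end Exchangeable

section Markov

variable {α : Type*} [MeasurableSpace α] [MeasurableSingletonClass α] {μ : Measure (ℕ → α)}
  {n : ℕ}

theorem IsExchangeable.measure_prefixWord_inter_mul_eq (hμ : IsExchangeable μ)
    {s t : Finset (Fin n → α)} (hst : ∀ x ∈ s, ∀ y ∈ t, ∃ σ : Equiv.Perm (Fin n), x ∘ σ = y)
    {B : Set (ℕ → α)} (hB : MeasurableSet B)
    (hB_symm : ∀ τ : Equiv.Perm (Fin n), (fun f => f ∘ τ.extendToNat) ⁻¹' B = B) :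
    μ (prefixWord n ⁻¹' s ∩ B) * μ (prefixWord n ⁻¹' t) =
      μ (prefixWord n ⁻¹' t ∩ B) * μ (prefixWord n ⁻¹' s) := by
  have hcyl : ∀ {C : Set (ℕ → α)}, MeasurableSet C →
      (∀ τ : Equiv.Perm (Fin n), (fun f => f ∘ τ.extendToNat) ⁻¹' C = C) →
      ∀ x ∈ s, ∀ y ∈ t, μ (prefixWord n ⁻¹' {x} ∩ C) = μ (prefixWord n ⁻¹' {y} ∩ C) := by
    intro C hC hC_symm x hx y hy
    obtain ⟨σ, rfl⟩ := hst x hx y hy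
    exact (hμ.measure_prefixWord_comp_perm_inter x σ hC hC_symm).symm
  have hπ := measurable_prefixWord (α := α) n
  rw [measure_preimage_finset_inter_eq_sum hπ s B, measure_preimage_finset_inter_eq_sum hπ t B,
    ← Set.inter_univ (prefixWord n ⁻¹' (t : Set (Fin n → α))),
    ← Set.inter_univ (prefixWord n ⁻¹' (s : Set (Fin n → α))),
    measure_preimage_finset_inter_eq_sum hπ t, measure_preimage_finset_inter_eq_sum hπ s]
  exact sum_mul_sum_eq_of_forall fun x hx y hy =>
    ⟨hcyl hB hB_symm x hx y hy, hcyl MeasurableSet.univ (fun _ => rfl) x hx y hy⟩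

variable [Finite α] [DecidableEq α]

theorem IsExchangeable.measure_inter_mul_measure_eq (hμ : IsExchangeable μ)
    {A T : Set (ℕ → α)} (hA : ∀ f g, prefixWord n f = prefixWord n g → f ∈ A → g ∈ A)
    (hT : ∀ f g, prefixWord n f = prefixWord n g → f ∈ T → g ∈ T)
    (hAT : ∀ f ∈ A, ∀ g ∈ T, empiricalCount f n = empiricalCount g n)
    {B : Set (ℕ → α)} (hB : MeasurableSet B)
    (hB_symm : ∀ τ : Equiv.Perm (Fin n), (fun f => f ∘ τ.extendToNat) ⁻¹' B = B) :
    μ (A ∩ B) * μ T = μ (T ∩ B) * μ A := by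
  have hs := (Set.toFinite (prefixWord n '' A)).coe_toFinset
  have ht := (Set.toFinite (prefixWord n '' T)).coe_toFinset
  rw [← Set.preimage_image_eq_of_forall hA, ← Set.preimage_image_eq_of_forall hT, ← hs, ← ht]
  refine hμ.measure_prefixWord_inter_mul_eq ?_ hB hB_symm
  rintro _ hx _ hy
  obtain ⟨f, hf, rfl⟩ := (Set.Finite.mem_toFinset _).mp hx
  obtain ⟨g, hg, rfl⟩ := (Set.Finite.mem_toFinset _).mp hy
  refine exists_perm_comp_eq_of_card_fiber_eq fun a => ?_
  rw [← empiricalCount_eq_card_prefixWord, ← empiricalCount_eq_card_prefixWord, hAT f hf g hg]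

theorem measurable_empiricalCount (m : ℕ) :
    Measurable fun f : ℕ → α => empiricalCount f m := by
  have : (fun f : ℕ → α => empiricalCount f m) =
      (fun x : Fin m → α => fun a => #{i | x i = a}) ∘ prefixWord m := by
    funext f a
    exact empiricalCount_eq_card_prefixWord f m a
  rw [this]
  exact (measurable_of_finite _).comp (measurable_prefixWord m)

theorem IsExchangeable.empiricalCount_markov [IsFiniteMeasure μ] (hμ : IsExchangeable μ)
    (path : ℕ → α → ℕ) (z : α → ℕ) (hpath : path 0 = 0)
    (hpos : μ (⋂ i ∈ Icc 1 n, {f | empiricalCount f i = path i}) ≠ 0) :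
    (μ ((⋂ i ∈ Icc 1 n, {f | empiricalCount f i = path i}) ∩
        {f | empiricalCount f (n + 1) = z})).toReal /
        (μ (⋂ i ∈ Icc 1 n, {f | empiricalCount f i = path i})).toReal =
      (μ ({f | empiricalCount f n = path n} ∩ {f | empiricalCount f (n + 1) = z})).toReal /
        (μ {f | empiricalCount f n = path n}).toReal := by
  set A := ⋂ i ∈ Icc 1 n, {f : ℕ → α | empiricalCount f i = path i}
  set T := {f : ℕ → α | empiricalCount f n = path n}
  set E := {f : ℕ → α | empiricalCount f (n + 1) = z}
  have hdet : ∀ {i}, i ≤ n → ∀ f g : ℕ → α, prefixWord n f = prefixWord n g →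
      empiricalCount f i = empiricalCount g i :=
    fun hi f g h => empiricalCount_congr fun k hk => congrFun h ⟨k, by omega⟩
  have hA : ∀ f g, prefixWord n f = prefixWord n g → f ∈ A → g ∈ A := by
    simp only [A, Set.mem_iInter₂, Set.mem_ofPred_eq]
    intro f g h hf i hi
    rw [← hdet (mem_Icc.mp hi).2 f g h, hf i hi]
  have hT : ∀ f g, prefixWord n f = prefixWord n g → f ∈ T → g ∈ T := by
    intro f g h hf
    rw [Set.mem_ofPred_eq, ← hdet le_rfl f g h, hf]
  have hAT : A ⊆ T := by
    intro f hf
    rcases n.eq_zero_or_pos with rfl | hn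
    · simp [T, hpath, empiricalCount, funext_iff]
    · exact Set.mem_iInter₂.mp hf n (mem_Icc.mpr ⟨hn, le_rfl⟩)
  have hE_symm : ∀ τ : Equiv.Perm (Fin n), (fun f => f ∘ τ.extendToNat) ⁻¹' E = E := by
    intro τ
    ext f
    simp [E, empiricalCount_comp_extendToNat n.le_succ]
  have hcross : μ (A ∩ E) * μ T = μ (T ∩ E) * μ A :=
    hμ.measure_inter_mul_measure_eq hA hT (fun f hf g hg => (hAT hf).trans hg.symm)
      (measurable_empiricalCount _ (measurableSet_singleton z)) hE_symm
  have hT_pos : μ T ≠ 0 := ((pos_iff_ne_zero.mpr hpos).trans_le (measure_mono hAT)).ne'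
  rw [div_eq_div_iff (ENNReal.toReal_ne_zero.mpr ⟨hpos, measure_ne_top μ A⟩)
    (ENNReal.toReal_ne_zero.mpr ⟨hT_pos, measure_ne_top μ T⟩), ← ENNReal.toReal_mul,
    ← ENNReal.toReal_mul, hcross]

end Markov

theorem empirical_counts_markov_general
    {Ω : Type*} [MeasurableSpace Ω] (P : Measure Ω) [IsProbabilityMeasure P]
    (d : ℕ)
    (X : ℕ → Ω → Fin d) (hX : ∀ n, Measurable (X n))
    -- exchangeability
    (hexch : ∀ σ : Equiv.Perm ℕ, {i | σ i ≠ i}.Finite →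
      P.map (fun ω => fun n => X (σ n) ω) = P.map (fun ω => fun n => X n ω))
    -- Y_n = vector of empirical counts of X_1,…,X_n (i.e. of X_0,…,X_{n-1})
    (Y : ℕ → Ω → Fin d → ℕ)
    (hYdef : ∀ n ω j, Y n ω j = ((Finset.range n).filter (fun i => X i ω = j)).card)
    (n : ℕ) (path : ℕ → Fin d → ℕ) (z : Fin d → ℕ)
    (hpath : ∀ i ≤ n, ∑ j, path i j = i)
    (hpos : 0 < P (⋂ i ∈ Finset.Icc 1 n, {ω | Y i ω = path i})) :
    (P ((⋂ i ∈ Finset.Icc 1 n, {ω | Y i ω = path i}) ∩ {ω | Y (n + 1) ω = z})).toReal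
        / (P (⋂ i ∈ Finset.Icc 1 n, {ω | Y i ω = path i})).toReal
      = (P ({ω | Y n ω = path n} ∩ {ω | Y (n + 1) ω = z})).toReal
        / (P {ω | Y n ω = path n}).toReal := by
  set ξ : Ω → ℕ → Fin d := fun ω k => X k ω
  have hξ : Measurable ξ := measurable_pi_lambda _ hX
  have hμ : IsExchangeable (P.map ξ) := fun τ hτ => by
    rw [Measure.map_map (g := fun f => f ∘ τ)
      (measurable_pi_lambda _ fun _ => measurable_pi_apply _) hξ]
    exact hexch τ hτ
  have hY : ∀ m c, {ω | Y m ω = c} = ξ ⁻¹' {f | empiricalCount f m = c} := by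
    intro m c
    ext ω
    simp [funext_iff, hYdef, empiricalCount, ξ]
  have hmeas : ∀ m c, MeasurableSet {f : ℕ → Fin d | empiricalCount f m = c} :=
    fun m c => measurable_empiricalCount m (measurableSet_singleton c)
  have hA := Finset.measurableSet_biInter (Icc 1 n) fun i _ => hmeas i (path i)
  have hpath0 : path 0 = 0 := funext fun j => sum_eq_zero_iff.mp (hpath 0 n.zero_le) j (mem_univ j)
  simp only [hY, ← Set.preimage_iInter₂, ← Set.preimage_inter] at hpos ⊢
  rw [← Measure.map_apply hξ hA] at hpos
  rw [← Measure.map_apply hξ hA, ← Measure.map_apply hξ (hA.inter (hmeas _ _)),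
    ← Measure.map_apply hξ (hmeas _ _), ← Measure.map_apply hξ ((hmeas _ _).inter (hmeas _ _))]
  exact hμ.empiricalCount_markov path z hpath0 hpos.ne'

/-- If X is an exchangeable sequence with values in the finite set
E = {1,…,d} and Y_n is the vector of empirical counts, then Y is a Markov chain:
P(Y_{n+1} = z | Y_n = y_n, …, Y_1 = y_1) = P(Y_{n+1} = z | Y_n = y_n) whenever
the conditioning event has positive probability. -/
theorem empirical_counts_markov
    {Ω : Type*} [MeasurableSpace Ω] (P : Measure Ω) [IsProbabilityMeasure P]
    (d : ℕ) (hd : 0 < d)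
    (X : ℕ → Ω → Fin d) (hX : ∀ n, Measurable (X n))
    -- exchangeability
    (hexch : ∀ σ : Equiv.Perm ℕ, {i | σ i ≠ i}.Finite →
      P.map (fun ω => fun n => X (σ n) ω) = P.map (fun ω => fun n => X n ω))
    -- Y_n = vector of empirical counts of X_1,…,X_n (i.e. of X_0,…,X_{n-1})
    (Y : ℕ → Ω → Fin d → ℕ)
    (hYdef : ∀ n ω j, Y n ω j = ((Finset.range n).filter (fun i => X i ω = j)).card)
    (n : ℕ) (path : ℕ → Fin d → ℕ) (z : Fin d → ℕ)
    (hpath : ∀ i ≤ n, ∑ j, path i j = i)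
    (hpos : 0 < P (⋂ i ∈ Finset.Icc 1 n, {ω | Y i ω = path i})) :
    (P ((⋂ i ∈ Finset.Icc 1 n, {ω | Y i ω = path i}) ∩ {ω | Y (n + 1) ω = z})).toReal
        / (P (⋂ i ∈ Finset.Icc 1 n, {ω | Y i ω = path i})).toReal
      = (P ({ω | Y n ω = path n} ∩ {ω | Y (n + 1) ω = z})).toReal
        / (P {ω | Y n ω = path n}).toReal :=
  empirical_counts_markov_general P d X hX hexch Y hYdef n path z hpath hpos
end

section
/- Let X = (X_n) be an exchangeable sequence with values in E = {1,…,d} and let Y_n be the vector of empirical counts. Then the cotransitions of Y are P(Y_n = y | Y_{n+1} = y + e_j) = (y_j + 1)/(n + 1) for all y ∈ 𝔽_n and j with P(Y_{n+1} = y + e_j) > 0 — the same cotransitions as the uniform multinomial random walk. -/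
open MeasureTheory Filter

/-- If X is an exchangeable sequence with values in {1,…,d} and Y_n
is the vector of empirical counts, then the cotransitions of Y are
P(Y_n = y | Y_{n+1} = y + e_j) = (y_j + 1)/(n + 1) whenever
P(Y_{n+1} = y + e_j) > 0 — the same as for the uniform multinomial random walk. -/
theorem empirical_counts_cotransitions
    {Ω : Type*} [MeasurableSpace Ω] (P : Measure Ω) [IsProbabilityMeasure P]
    (d : ℕ) (hd : 0 < d)
    (X : ℕ → Ω → Fin d) (hX : ∀ n, Measurable (X n))
    (hexch : ∀ σ : Equiv.Perm ℕ, {i | σ i ≠ i}.Finite →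
      P.map (fun ω => fun n => X (σ n) ω) = P.map (fun ω => fun n => X n ω))
    (Y : ℕ → Ω → Fin d → ℕ)
    (hYdef : ∀ n ω j, Y n ω j = ((Finset.range n).filter (fun i => X i ω = j)).card)
    (n : ℕ) (y : Fin d → ℕ) (hy : ∑ i, y i = n) (j : Fin d)
    (hpos : 0 < P {ω | Y (n + 1) ω = fun i => y i + if i = j then 1 else 0}) :
    (P ({ω | Y n ω = y} ∩ {ω | Y (n + 1) ω = fun i => y i + if i = j then 1 else 0})).toReal
        / (P {ω | Y (n + 1) ω = fun i => y i + if i = j then 1 else 0}).toReal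
      = ((y j : ℝ) + 1) / ((n : ℝ) + 1) := by
  classical
  set z : Fin d → ℕ := fun i => y i + if i = j then 1 else 0 with hz
  set A : Set Ω := {ω | Y (n + 1) ω = z} with hA
  -- measurability of count functions
  have hcount : ∀ (m : ℕ) (k : Fin d),
      Measurable fun ω => ((Finset.range m).filter (fun i => X i ω = k)).card := by
    intro m k
    have hrw : (fun ω => ((Finset.range m).filter (fun i => X i ω = k)).card)
        = fun ω => ∑ i ∈ Finset.range m, if X i ω = k then 1 else 0 := by
      funext ω; rw [Finset.card_filter]
    rw [hrw]
    exact Finset.measurable_sum _ fun i _ =>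
      Measurable.ite (hX i (measurableSet_singleton k)) measurable_const measurable_const
  have hAm : MeasurableSet A := by
    have : A = ⋂ k, (fun ω => ((Finset.range (n + 1)).filter (fun i => X i ω = k)).card) ⁻¹' {z k} := by
      ext ω
      simp only [hA, Set.mem_setOf_eq, Set.mem_iInter, Set.mem_preimage, Set.mem_singleton_iff,
        funext_iff, hYdef]
    rw [this]
    exact MeasurableSet.iInter fun k => (hcount _ k) (measurableSet_singleton _)
  have hBm : ∀ i : ℕ, MeasurableSet {ω | X i ω = j} := fun i => hX i (measurableSet_singleton j)
  -- Step 1: {Y n = y} ∩ A = {X n = j} ∩ A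
  have hY1 : ∀ ω k, Y (n + 1) ω k = Y n ω k + if X n ω = k then 1 else 0 := by
    intro ω k
    rw [hYdef, hYdef, Finset.range_add_one, Finset.filter_insert]
    split
    · rw [Finset.card_insert_of_notMem (by simp)]
    · simp
  have hstep1 : {ω | Y n ω = y} ∩ A = {ω | X n ω = j} ∩ A := by
    ext ω
    simp only [Set.mem_inter_iff, Set.mem_setOf_eq, hA]
    constructor
    · rintro ⟨h1, h2⟩
      refine ⟨?_, h2⟩
      have h3 := hY1 ω j
      rw [h1, congrFun h2 j] at h3
      simp only [hz] at h3
      by_contra h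
      simp [h] at h3
    · rintro ⟨h1, h2⟩
      refine ⟨?_, h2⟩
      funext k
      have h3 := hY1 ω k
      rw [congrFun h2 k, h1] at h3
      simp only [hz] at h3
      by_cases hk : k = j
      · subst hk; simp at h3; omega
      · rw [if_neg hk, if_neg (fun h => hk h.symm)] at h3; omega
  -- Step 2: swap invariance
  have hswap : ∀ i ≤ n, P ({ω | X i ω = j} ∩ A) = P ({ω | X n ω = j} ∩ A) := by
    intro i hi
    have hσfin : {m | Equiv.swap i n m ≠ m}.Finite := by
      apply ((Set.finite_singleton n).insert i).subset
      intro m hm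
      simp only [Set.mem_setOf_eq] at hm
      rcases eq_or_ne m i with rfl | hmi
      · exact Set.mem_insert _ _
      rcases eq_or_ne m n with rfl | hmn
      · exact Set.mem_insert_of_mem _ rfl
      · exact absurd (Equiv.swap_apply_of_ne_of_ne hmi hmn) hm
    have hσmem : ∀ m, m ∈ Finset.range (n + 1) → Equiv.swap i n m ∈ Finset.range (n + 1) := by
      intro m hm
      simp only [Finset.mem_range] at hm ⊢
      rcases eq_or_ne m i with rfl | hmi
      · rw [Equiv.swap_apply_left]; omega
      rcases eq_or_ne m n with rfl | hmn
      · rw [Equiv.swap_apply_right]; omega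
      · rw [Equiv.swap_apply_of_ne_of_ne hmi hmn]; exact hm
    have hcard : ∀ (ω : Ω) (k : Fin d),
        ((Finset.range (n + 1)).filter (fun m => X (Equiv.swap i n m) ω = k)).card
          = ((Finset.range (n + 1)).filter (fun m => X m ω = k)).card := by
      intro ω k
      apply Finset.card_equiv (Equiv.swap i n)
      intro m
      simp only [Finset.mem_filter]
      constructor
      · rintro ⟨h1, h2⟩; exact ⟨hσmem m h1, h2⟩
      · rintro ⟨h1, h2⟩
        refine ⟨?_, h2⟩
        have := hσmem (Equiv.swap i n m) h1
        rwa [Equiv.swap_apply_self] at this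
    set S : Set (ℕ → Fin d) :=
      {f | f n = j ∧ ∀ k, ((Finset.range (n + 1)).filter (fun m => f m = k)).card = z k} with hS
    have hSm : MeasurableSet S := by
      have h1 : MeasurableSet {f : ℕ → Fin d | f n = j} := by
        have he : {f : ℕ → Fin d | f n = j} = (fun f : ℕ → Fin d => f n) ⁻¹' {j} := rfl
        rw [he]
        exact (measurable_pi_apply n) (measurableSet_singleton j)
      have h2 : ∀ k : Fin d, MeasurableSet
          {f : ℕ → Fin d | ((Finset.range (n + 1)).filter (fun m => f m = k)).card = z k} := by
        intro k
        have hm : Measurable fun f : ℕ → Fin d =>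
            ((Finset.range (n + 1)).filter (fun m => f m = k)).card := by
          have hrw : (fun f : ℕ → Fin d => ((Finset.range (n + 1)).filter (fun m => f m = k)).card)
              = fun f => ∑ m ∈ Finset.range (n + 1), if f m = k then 1 else 0 := by
            funext f; rw [Finset.card_filter]
          rw [hrw]
          refine Finset.measurable_sum _ fun m _ => ?_
          refine Measurable.ite ?_ measurable_const measurable_const
          have he : {f : ℕ → Fin d | f m = k} = (fun f : ℕ → Fin d => f m) ⁻¹' {k} := rfl
          rw [show {f : ℕ → Fin d | f m = k} = (fun f : ℕ → Fin d => f m) ⁻¹' {k} from rfl]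
          exact (measurable_pi_apply m) (measurableSet_singleton k)
        exact hm (measurableSet_singleton _)
      have : S = {f : ℕ → Fin d | f n = j} ∩ ⋂ k,
          {f : ℕ → Fin d | ((Finset.range (n + 1)).filter (fun m => f m = k)).card = z k} := by
        ext f; simp [hS, Set.mem_iInter]
      rw [this]
      exact h1.inter (MeasurableSet.iInter h2)
    have hmeas1 : Measurable (fun ω => fun m => X m ω) :=
      measurable_pi_lambda _ fun m => hX m
    have hmeas2 : Measurable (fun ω => fun m => X (Equiv.swap i n m) ω) :=
      measurable_pi_lambda _ fun m => hX (Equiv.swap i n m)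
    have hmap := congrArg (fun μ : Measure (ℕ → Fin d) => μ S) (hexch (Equiv.swap i n) hσfin)
    simp only [Measure.map_apply hmeas2 hSm, Measure.map_apply hmeas1 hSm] at hmap
    have hpre1 : (fun ω => fun m => X m ω) ⁻¹' S = {ω | X n ω = j} ∩ A := by
      ext ω
      simp only [Set.mem_preimage, hS, Set.mem_setOf_eq, Set.mem_inter_iff, hA, funext_iff, hYdef]
    have hpre2 : (fun ω => fun m => X (Equiv.swap i n m) ω) ⁻¹' S = {ω | X i ω = j} ∩ A := by
      ext ω
      simp only [Set.mem_preimage, hS, Set.mem_setOf_eq, Set.mem_inter_iff, hA, funext_iff, hYdef,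
        Equiv.swap_apply_right]
      constructor
      · rintro ⟨h1, h2⟩
        exact ⟨h1, fun k => by rw [← hcard ω k]; exact h2 k⟩
      · rintro ⟨h1, h2⟩
        exact ⟨h1, fun k => by rw [hcard ω k]; exact h2 k⟩
    rw [hpre1, hpre2] at hmap
    exact hmap
  -- Step 3: sum over i
  have hsum : ∑ i ∈ Finset.range (n + 1), P ({ω | X i ω = j} ∩ A)
      = ((y j : ENNReal) + 1) * P A := by
    have h1 : ∀ i : ℕ, P ({ω | X i ω = j} ∩ A)
        = ∫⁻ ω in A, Set.indicator {ω | X i ω = j} 1 ω ∂P := by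
      intro i
      rw [lintegral_indicator_one (hBm i), Measure.restrict_apply (hBm i)]
    rw [Finset.sum_congr rfl fun i _ => h1 i, ← lintegral_finset_sum]
    · have hcongr : ∀ ω ∈ A,
          (∑ i ∈ Finset.range (n + 1), Set.indicator {ω | X i ω = j} 1 ω)
            = ((y j : ENNReal) + 1) := by
        intro ω hω
        have hcnt : ((Finset.range (n + 1)).filter (fun i => X i ω = j)).card = y j + 1 := by
          have := congrFun hω j
          rw [hYdef] at this
          simpa [hz] using this
        calc (∑ i ∈ Finset.range (n + 1), Set.indicator {ω | X i ω = j} 1 ω)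
            = ∑ i ∈ Finset.range (n + 1), if X i ω = j then (1 : ENNReal) else 0 := by
              refine Finset.sum_congr rfl fun i _ => ?_
              simp [Set.indicator_apply]
          _ = (((Finset.range (n + 1)).filter (fun i => X i ω = j)).card : ENNReal) := by
              rw [Finset.card_filter]
              push_cast
              exact Finset.sum_congr rfl fun i _ => by split <;> simp
          _ = ((y j : ENNReal) + 1) := by rw [hcnt]; push_cast; ring
      rw [setLIntegral_congr_fun hAm hcongr, setLIntegral_const]
    · exact fun i _ => measurable_one.indicator (hBm i)
  have hsum2 : ∑ i ∈ Finset.range (n + 1), P ({ω | X i ω = j} ∩ A)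
      = ((n : ENNReal) + 1) * P ({ω | X n ω = j} ∩ A) := by
    rw [Finset.sum_congr rfl fun i hi => hswap i (Nat.lt_succ_iff.mp (Finset.mem_range.mp hi)),
      Finset.sum_const, Finset.card_range, nsmul_eq_mul]
    push_cast
    ring
  have hkey : ((n : ENNReal) + 1) * P ({ω | X n ω = j} ∩ A)
      = ((y j : ENNReal) + 1) * P A := by
    rw [← hsum2, hsum]
  rw [hstep1]
  have hfin : P A ≠ ⊤ := (measure_lt_top P A).ne
  have hfin2 : P ({ω | X n ω = j} ∩ A) ≠ ⊤ := (measure_lt_top P _).ne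
  have hb : (P A).toReal > 0 := ENNReal.toReal_pos hpos.ne' hfin
  have hkeyR : ((n : ℝ) + 1) * (P ({ω | X n ω = j} ∩ A)).toReal
      = ((y j : ℝ) + 1) * (P A).toReal := by
    have h := congrArg ENNReal.toReal hkey
    rw [ENNReal.toReal_mul, ENNReal.toReal_mul] at h
    rw [ENNReal.toReal_add (by simp) (by simp), ENNReal.toReal_add (by simp) (by simp)] at h
    simpa using h
  have hn1 : (0 : ℝ) < (n : ℝ) + 1 := by positivity
  field_simp
  linarith [hkeyR]
end

section
/- de Finetti's theorem for a finite state space: if X = (X_n)_{n≥1} is an exchangeable sequence with values in a finite set E = {1,…,d}, then there exists a random probability vector M with values in the simplex S(d) such that conditionally on M = μ, the X_n are i.i.d. with distribution μ; i.e., P(X_1 = a_1, …, X_k = a_k) = ∫ ∏_{i=1}^k μ(a_i) dP^M(μ) for all k and a_1,…,a_k ∈ E. Moreover, M may be taken as the almost-sure limit of the empirical frequency vectors Y_n/n. -/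
open MeasureTheory Filter
open scoped ENNReal

theorem exists_perm_extend {k : ℕ} (ι : Fin k → ℕ) (hι : Function.Injective ι) :
    ∃ σ : Equiv.Perm ℕ, {i | σ i ≠ i}.Finite ∧ ∀ l : Fin k, σ l = ι l := by
  classical
  set N : ℕ := k + (Finset.univ.sup fun l : Fin k => ι l) + 1 with hN
  have hkN : k ≤ N := by omega
  have hιN : ∀ l : Fin k, ι l < N := by
    intro l
    have h := Finset.le_sup (f := fun l : Fin k => ι l) (Finset.mem_univ l)
    omega
  set u : Fin k → Fin N := fun l => Fin.castLE hkN l with hu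
  set w : Fin k → Fin N := fun l => ⟨ι l, hιN l⟩ with hw
  have hu_inj : Function.Injective u := fun a b h => by
    simpa [hu, Fin.ext_iff] using congrArg Fin.val h
  have hw_inj : Function.Injective w := fun a b h => by
    apply hι; simpa [hw, Fin.ext_iff] using congrArg Fin.val h
  set e : {x : Fin N // x ∈ Set.range u} ≃ {x : Fin N // x ∈ Set.range w} :=
    (Equiv.ofInjective u hu_inj).symm.trans (Equiv.ofInjective w hw_inj) with he
  set π : Equiv.Perm (Fin N) := e.extendSubtype with hπ
  have hπ_apply : ∀ l : Fin k, π (u l) = w l := by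
    intro l
    have h1 : π (u l) = e ⟨u l, Set.mem_range_self l⟩ :=
      Equiv.extendSubtype_apply_of_mem e (u l) (Set.mem_range_self l)
    rw [h1]
    simp [he]
  set σ : Equiv.Perm ℕ := π.extendDomain (Fin.equivSubtype (n := N)) with hσ
  refine ⟨σ, ?_, ?_⟩
  · apply Set.Finite.subset (Set.finite_Iio N)
    intro i hi
    by_contra h
    simp only [Set.mem_Iio, not_lt] at h
    exact hi (π.extendDomain_apply_not_subtype _ (by simpa using not_lt.2 h))
  · intro l
    have hlN : (l : ℕ) < N := lt_of_lt_of_le l.2 hkN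
    have hsub : ((l : ℕ) : ℕ) < N := hlN
    have h1 : σ (l : ℕ) = ((Fin.equivSubtype (π ((Fin.equivSubtype (n := N)).symm ⟨(l : ℕ), hlN⟩))) : ℕ) := by
      rw [hσ, Equiv.Perm.extendDomain_apply_subtype π Fin.equivSubtype hlN]
    have h2 : (Fin.equivSubtype (n := N)).symm ⟨(l : ℕ), hlN⟩ = u l := by
      simp [Fin.equivSubtype, hu, Fin.ext_iff]
    rw [h1, h2, hπ_apply l]
    simp [Fin.equivSubtype, hw]

theorem exch_cylinder {Ω : Type*} [MeasurableSpace Ω] (P : Measure Ω) [IsProbabilityMeasure P]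
    {d : ℕ} (X : ℕ → Ω → Fin d) (hX : ∀ n, Measurable (X n))
    (hexch : ∀ σ : Equiv.Perm ℕ, {i | σ i ≠ i}.Finite →
      P.map (fun ω => fun n => X (σ n) ω) = P.map (fun ω => fun n => X n ω))
    {k : ℕ} (a : Fin k → Fin d) (ι : Fin k → ℕ) (hι : Function.Injective ι) :
    P (⋂ l : Fin k, {ω | X (ι l) ω = a l}) = P (⋂ l : Fin k, {ω | X (l : ℕ) ω = a l}) := by
  obtain ⟨σ, hσfin, hσι⟩ := exists_perm_extend ι hι
  have hmap := hexch σ hσfin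
  set A : Set (ℕ → Fin d) := ⋂ l : Fin k, {f | f (l : ℕ) = a l} with hA
  have hAmeas : MeasurableSet A := by
    apply MeasurableSet.iInter
    intro l
    show MeasurableSet ((fun f : ℕ → Fin d => f (l : ℕ)) ⁻¹' {a l})
    exact (measurable_pi_apply (l : ℕ)) (measurableSet_singleton (a l))
  have hmeas1 : Measurable (fun ω => fun n => X (σ n) ω) :=
    measurable_pi_lambda _ fun n => hX (σ n)
  have hmeas2 : Measurable (fun ω => fun n => X n ω) :=
    measurable_pi_lambda _ fun n => hX n
  have h1 : P.map (fun ω => fun n => X (σ n) ω) A = P ((fun ω => fun n => X (σ n) ω) ⁻¹' A) :=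
    Measure.map_apply hmeas1 hAmeas
  have h2 : P.map (fun ω => fun n => X n ω) A = P ((fun ω => fun n => X n ω) ⁻¹' A) :=
    Measure.map_apply hmeas2 hAmeas
  have hpre1 : (fun ω => fun n => X (σ n) ω) ⁻¹' A = ⋂ l : Fin k, {ω | X (ι l) ω = a l} := by
    ext ω
    simp only [hA, Set.preimage_iInter, Set.mem_iInter, Set.mem_preimage, Set.mem_setOf_eq]
    constructor
    · intro h l; rw [← hσι l]; exact h l
    · intro h l; rw [hσι l]; exact h l
  have hpre2 : (fun ω => fun n => X n ω) ⁻¹' A = ⋂ l : Fin k, {ω | X (l : ℕ) ω = a l} := by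
    ext ω
    simp [hA]
  rw [← hpre1, ← hpre2, ← h1, ← h2, hmap]

theorem measSet {Ω : Type*} [MeasurableSpace Ω] {d : ℕ} {X : ℕ → Ω → Fin d}
    (hX : ∀ n, Measurable (X n)) (i : ℕ) (j : Fin d) :
    MeasurableSet {ω | X i ω = j} := by
  show MeasurableSet (X i ⁻¹' {j})
  exact (hX i) (measurableSet_singleton j)

theorem integral_prod_ite {Ω : Type*} [MeasurableSpace Ω] (P : Measure Ω) [IsProbabilityMeasure P]
    {d : ℕ} (X : ℕ → Ω → Fin d) (hX : ∀ n, Measurable (X n))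
    {k : ℕ} (a : Fin k → Fin d) (ι : Fin k → ℕ) :
    ∫ ω, ∏ l : Fin k, (if X (ι l) ω = a l then (1:ℝ) else 0) ∂P
      = (P (⋂ l : Fin k, {ω | X (ι l) ω = a l})).toReal := by
  classical
  set A : Set Ω := ⋂ l : Fin k, {ω | X (ι l) ω = a l} with hA
  have hAmeas : MeasurableSet A := MeasurableSet.iInter fun l => measSet hX (ι l) (a l)
  have hfun : ∀ ω, (∏ l : Fin k, (if X (ι l) ω = a l then (1:ℝ) else 0))
      = Set.indicator A (fun _ => (1:ℝ)) ω := by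
    intro ω
    rw [Finset.prod_boole, Set.indicator_apply]
    by_cases h : ω ∈ A
    · rw [if_pos h, if_pos]
      intro l _
      exact Set.mem_iInter.mp h l
    · rw [if_neg h, if_neg]
      intro hall
      exact h (Set.mem_iInter.mpr fun l => hall l (Finset.mem_univ l))
  simp_rw [hfun]
  rw [integral_indicator_const (1:ℝ) hAmeas]
  simp
  rfl

section
variable {Ω : Type*} [MeasurableSpace Ω] (P : Measure Ω) [IsProbabilityMeasure P]
    {d : ℕ} (X : ℕ → Ω → Fin d) (hX : ∀ n, Measurable (X n))
include hX

theorem measurable_F (i : ℕ) (j : Fin d) :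
    Measurable (fun ω => if X i ω = j then (1:ℝ) else 0) :=
  Measurable.ite (by
    show MeasurableSet (X i ⁻¹' {j})
    exact (hX i) (measurableSet_singleton j)) measurable_const measurable_const

theorem integrable_FF (i i' : ℕ) (j j' : Fin d) :
    Integrable (fun ω => (if X i ω = j then (1:ℝ) else 0) * (if X i' ω = j' then (1:ℝ) else 0)) P := by
  apply Integrable.mono' (integrable_const (1:ℝ))
    (((measurable_F X hX i j).mul (measurable_F X hX i' j')).aestronglyMeasurable)
  filter_upwards with ω
  by_cases h1 : X i ω = j <;> by_cases h2 : X i' ω = j' <;> simp [h1, h2]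

theorem integrable_F (i : ℕ) (j : Fin d) :
    Integrable (fun ω => (if X i ω = j then (1:ℝ) else 0)) P := by
  have := integrable_FF P X hX i i j j
  convert this using 2 with ω
  by_cases h : X i ω = j <;> simp [h]
end

section
variable {Ω : Type*} [MeasurableSpace Ω] (P : Measure Ω) [IsProbabilityMeasure P]
    {d : ℕ} (X : ℕ → Ω → Fin d) (hX : ∀ n, Measurable (X n))
    (hexch : ∀ σ : Equiv.Perm ℕ, {i | σ i ≠ i}.Finite →
      P.map (fun ω => fun n => X (σ n) ω) = P.map (fun ω => fun n => X n ω))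
include hX hexch

theorem prod_moment {k : ℕ} (a : Fin k → Fin d) (ι : Fin k → ℕ) (hι : Function.Injective ι) :
    ∫ ω, ∏ l : Fin k, (if X (ι l) ω = a l then (1:ℝ) else 0) ∂P
      = (P (⋂ l : Fin k, {ω | X (l : ℕ) ω = a l})).toReal := by
  rw [integral_prod_ite P X hX a ι, exch_cylinder P X hX hexch a ι hι]

theorem int_F_val (i : ℕ) (j : Fin d) :
    ∫ ω, (if X i ω = j then (1:ℝ) else 0) ∂P
      = (P (⋂ l : Fin 1, {ω | X (l : ℕ) ω = j})).toReal := by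
  have h := prod_moment P X hX hexch (fun _ : Fin 1 => j) (fun _ => i)
    (Function.injective_of_subsingleton _)
  simpa using h

theorem int_FF_val {i i' : ℕ} (hne : i ≠ i') (j : Fin d) :
    ∫ ω, (if X i ω = j then (1:ℝ) else 0) * (if X i' ω = j then (1:ℝ) else 0) ∂P
      = (P (⋂ l : Fin 2, {ω | X (l : ℕ) ω = j})).toReal := by
  have hι : Function.Injective (![i, i'] : Fin 2 → ℕ) := by
    intro a b h
    fin_cases a <;> fin_cases b <;> simp_all
  have h := prod_moment P X hX hexch (fun _ : Fin 2 => j) ![i, i'] hι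
  rw [← h]
  congr 1
  ext ω
  rw [Fin.prod_univ_two]
  simp
  split_ifs <;> simp_all

theorem int_FF_eq (i i' : ℕ) (j : Fin d) :
    ∫ ω, (if X i ω = j then (1:ℝ) else 0) * (if X i' ω = j then (1:ℝ) else 0) ∂P
      = if i = i' then (P (⋂ l : Fin 1, {ω | X (l : ℕ) ω = j})).toReal
        else (P (⋂ l : Fin 2, {ω | X (l : ℕ) ω = j})).toReal := by
  by_cases h : i = i'
  · subst h
    rw [if_pos rfl, ← int_F_val P X hX hexch i j]
    congr 1
    ext ω
    by_cases hx : X i ω = j <;> simp [hx]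
  · rw [if_neg h, int_FF_val P X hX hexch h j]
end

section
variable {Ω : Type*} [MeasurableSpace Ω] (P : Measure Ω) [IsProbabilityMeasure P]
    {d : ℕ} (X : ℕ → Ω → Fin d) (hX : ∀ n, Measurable (X n))
    (hexch : ∀ σ : Equiv.Perm ℕ, {i | σ i ≠ i}.Finite →
      P.map (fun ω => fun n => X (σ n) ω) = P.map (fun ω => fun n => X n ω))
include hX hexch

theorem int_SS (j : Fin d) {m n : ℕ} (hm : 1 ≤ m) (hmn : m ≤ n) :
    ∫ ω, (∑ i ∈ Finset.range m, if X i ω = j then (1:ℝ) else 0)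
        * (∑ i' ∈ Finset.range n, if X i' ω = j then (1:ℝ) else 0) ∂P
      = (m : ℝ) * ((P (⋂ l : Fin 1, {ω | X (l : ℕ) ω = j})).toReal
          + ((n : ℝ) - 1) * (P (⋂ l : Fin 2, {ω | X (l : ℕ) ω = j})).toReal) := by
  set v := (P (⋂ l : Fin 1, {ω | X (l : ℕ) ω = j})).toReal with hv
  set c := (P (⋂ l : Fin 2, {ω | X (l : ℕ) ω = j})).toReal with hc
  have hexp : ∀ ω, (∑ i ∈ Finset.range m, if X i ω = j then (1:ℝ) else 0)
        * (∑ i' ∈ Finset.range n, if X i' ω = j then (1:ℝ) else 0)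
      = ∑ i ∈ Finset.range m, ∑ i' ∈ Finset.range n,
          (if X i ω = j then (1:ℝ) else 0) * (if X i' ω = j then (1:ℝ) else 0) := by
    intro ω
    rw [Finset.sum_mul_sum]
  simp_rw [hexp]
  rw [integral_finset_sum _ (fun i _ => integrable_finset_sum _
      (fun i' _ => integrable_FF P X hX i i' j j))]
  have : ∀ i ∈ Finset.range m,
      (∫ ω, ∑ i' ∈ Finset.range n,
          (if X i ω = j then (1:ℝ) else 0) * (if X i' ω = j then (1:ℝ) else 0) ∂P)
        = v + ((n : ℝ) - 1) * c := by
    intro i hi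
    rw [integral_finset_sum _ (fun i' _ => integrable_FF P X hX i i' j j)]
    have hterm : ∀ i' ∈ Finset.range n,
        (∫ ω, (if X i ω = j then (1:ℝ) else 0) * (if X i' ω = j then (1:ℝ) else 0) ∂P)
          = c + (if i' = i then v - c else 0) := by
      intro i' _
      rw [int_FF_eq P X hX hexch i i' j, ← hv, ← hc]
      by_cases h : i = i'
      · simp [h]
      · simp [h, Ne.symm h]
    rw [Finset.sum_congr rfl hterm, Finset.sum_add_distrib, Finset.sum_const,
      Finset.card_range, Finset.sum_ite_eq' (Finset.range n)]
    have : i ∈ Finset.range n := Finset.mem_range.mpr (lt_of_lt_of_le (Finset.mem_range.mp hi) hmn)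
    rw [if_pos this]
    push_cast
    ring
  rw [Finset.sum_congr rfl this, Finset.sum_const, Finset.card_range, nsmul_eq_mul]

theorem integrable_SS (j : Fin d) (m n : ℕ) :
    Integrable (fun ω => (∑ i ∈ Finset.range m, if X i ω = j then (1:ℝ) else 0)
        * (∑ i' ∈ Finset.range n, if X i' ω = j then (1:ℝ) else 0)) P := by
  have hexp : ∀ ω, (∑ i ∈ Finset.range m, if X i ω = j then (1:ℝ) else 0)
        * (∑ i' ∈ Finset.range n, if X i' ω = j then (1:ℝ) else 0)
      = ∑ p ∈ (Finset.range m) ×ˢ (Finset.range n),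
          (if X p.1 ω = j then (1:ℝ) else 0) * (if X p.2 ω = j then (1:ℝ) else 0) := by
    intro ω
    rw [Finset.sum_mul_sum, Finset.sum_product]
  simp_rw [hexp]
  exact integrable_finset_sum _ (fun p _ => integrable_FF P X hX p.1 p.2 j j)
end

section
variable {Ω : Type*} [MeasurableSpace Ω] (P : Measure Ω) [IsProbabilityMeasure P]
    {d : ℕ} (X : ℕ → Ω → Fin d) (hX : ∀ n, Measurable (X n))
    (hexch : ∀ σ : Equiv.Perm ℕ, {i | σ i ≠ i}.Finite →
      P.map (fun ω => fun n => X (σ n) ω) = P.map (fun ω => fun n => X n ω))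
include hX hexch

theorem int_sq_diff (j : Fin d) {m n : ℕ} (hm : 1 ≤ m) (hmn : m ≤ n) :
    ∫ ω, ((∑ i ∈ Finset.range m, if X i ω = j then (1:ℝ) else 0) / m
        - (∑ i ∈ Finset.range n, if X i ω = j then (1:ℝ) else 0) / n)^2 ∂P
      = ((P (⋂ l : Fin 1, {ω | X (l : ℕ) ω = j})).toReal
          - (P (⋂ l : Fin 2, {ω | X (l : ℕ) ω = j})).toReal) * (1/m - 1/n) := by
  have hn : 1 ≤ n := le_trans hm hmn
  have hm0 : (m : ℝ) ≠ 0 := Nat.cast_ne_zero.mpr (by omega)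
  have hn0 : (n : ℝ) ≠ 0 := Nat.cast_ne_zero.mpr (by omega)
  set Sm := fun ω => (∑ i ∈ Finset.range m, if X i ω = j then (1:ℝ) else 0) with hSm
  set Sn := fun ω => (∑ i ∈ Finset.range n, if X i ω = j then (1:ℝ) else 0) with hSn
  have hexp : ∀ ω, (Sm ω / m - Sn ω / n)^2
      = (1/((m:ℝ)*m)) * (Sm ω * Sm ω) - (2/((m:ℝ)*n)) * (Sm ω * Sn ω)
        + (1/((n:ℝ)*n)) * (Sn ω * Sn ω) := by
    intro ω
    field_simp
    ring
  rw [integral_congr_ae (Filter.Eventually.of_forall hexp)]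
  have i1 : Integrable (fun ω => (1/((m:ℝ)*m)) * (Sm ω * Sm ω)) P :=
    (integrable_SS P X hX hexch j m m).const_mul _
  have i2 : Integrable (fun ω => (2/((m:ℝ)*n)) * (Sm ω * Sn ω)) P :=
    (integrable_SS P X hX hexch j m n).const_mul _
  have i3 : Integrable (fun ω => (1/((n:ℝ)*n)) * (Sn ω * Sn ω)) P :=
    (integrable_SS P X hX hexch j n n).const_mul _
  have i12 : Integrable (fun ω => (1/((m:ℝ)*m)) * (Sm ω * Sm ω)
      - (2/((m:ℝ)*n)) * (Sm ω * Sn ω)) P := i1.sub i2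
  rw [integral_add i12 i3, integral_sub i1 i2,
    integral_const_mul, integral_const_mul, integral_const_mul,
    int_SS P X hX hexch j hm le_rfl, int_SS P X hX hexch j hm hmn,
    int_SS P X hX hexch j hn le_rfl]
  field_simp
  ring

theorem v_sub_c_nonneg (j : Fin d) :
    0 ≤ (P (⋂ l : Fin 1, {ω | X (l : ℕ) ω = j})).toReal
        - (P (⋂ l : Fin 2, {ω | X (l : ℕ) ω = j})).toReal := by
  have h := int_sq_diff P X hX hexch j (m := 1) (n := 2) le_rfl (by norm_num)
  have hpos : 0 ≤ ∫ ω, ((∑ i ∈ Finset.range 1, if X i ω = j then (1:ℝ) else 0) / 1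
        - (∑ i ∈ Finset.range 2, if X i ω = j then (1:ℝ) else 0) / 2)^2 ∂P :=
    integral_nonneg fun ω => sq_nonneg _
  simp only [Nat.cast_one, Nat.cast_ofNat] at h
  rw [h] at hpos
  have h2 : (0:ℝ) < 1/1 - 1/2 := by norm_num
  exact (mul_nonneg_iff_of_pos_right h2).mp hpos
end

theorem sq_integral_abs_le {Ω : Type*} [MeasurableSpace Ω] (P : Measure Ω) [IsProbabilityMeasure P]
    {g : Ω → ℝ} (hg : Integrable g P) (hg2 : Integrable (fun ω => g ω ^ 2) P) :
    (∫ ω, |g ω| ∂P) ^ 2 ≤ ∫ ω, g ω ^ 2 ∂P := by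
  set a := ∫ ω, |g ω| ∂P with ha
  have habs : Integrable (fun ω => |g ω|) P := hg.abs
  have key : 0 ≤ ∫ ω, (|g ω| - a) ^ 2 ∂P := integral_nonneg fun ω => sq_nonneg _
  have hexp : ∀ ω, (|g ω| - a) ^ 2 = g ω ^ 2 - (2 * a) * |g ω| + a ^ 2 := by
    intro ω
    have : |g ω| ^ 2 = g ω ^ 2 := sq_abs _
    nlinarith [sq_abs (g ω)]
  simp_rw [hexp] at key
  have i2 : Integrable (fun ω => (2 * a) * |g ω|) P := habs.const_mul _
  have i12 : Integrable (fun ω => g ω ^ 2 - (2 * a) * |g ω|) P := hg2.sub i2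
  rw [integral_add i12 (integrable_const _),
    integral_sub hg2 i2, integral_const_mul, integral_const] at key
  simp only [probReal_univ, measure_univ, ENNReal.toReal_one, smul_eq_mul, one_mul] at key
  nlinarith [key]

theorem ae_summable_of_summable_bound {Ω : Type*} [MeasurableSpace Ω] (P : Measure Ω)
    [IsProbabilityMeasure P] {h : ℕ → Ω → ℝ} (hmeas : ∀ k, Measurable (h k))
    (hint : ∀ k, Integrable (h k) P)
    {B : ℕ → ℝ} (hB : ∀ k, ∫ ω, |h k ω| ∂P ≤ B k) (hBsum : Summable B) :
    ∀ᵐ ω ∂P, Summable (fun k => h k ω) := by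
  have hB0 : ∀ k, (0:ℝ) ≤ B k := fun k =>
    le_trans (integral_nonneg fun ω => abs_nonneg _) (hB k)
  have key : ∑' k, ∫⁻ ω, ‖h k ω‖₊ ∂P ≠ ⊤ := by
    have heq : ∀ k, ∫⁻ ω, ‖h k ω‖₊ ∂P = ENNReal.ofReal (∫ ω, |h k ω| ∂P) := by
      intro k
      simp_rw [← enorm_eq_nnnorm]
      rw [← ofReal_integral_norm_eq_lintegral_enorm (hint k)]
      simp_rw [Real.norm_eq_abs]
    have hle : ∑' k, ∫⁻ ω, ‖h k ω‖₊ ∂P ≤ ∑' k, ENNReal.ofReal (B k) := by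
      rw [funext heq]
      exact ENNReal.tsum_le_tsum fun k => ENNReal.ofReal_le_ofReal (hB k)
    have : ∑' k, ENNReal.ofReal (B k) < ⊤ := by
      rw [← ENNReal.ofReal_tsum_of_nonneg hB0 hBsum]
      exact ENNReal.ofReal_lt_top
    exact ne_top_of_le_ne_top this.ne hle
  have hmeas' : ∀ k, AEMeasurable (fun ω => (‖h k ω‖₊ : ℝ≥0∞)) P := fun k =>
    ((hmeas k).nnnorm.coe_nnreal_ennreal).aemeasurable
  rw [← lintegral_tsum hmeas'] at key
  refine (ae_lt_top' (AEMeasurable.ennreal_tsum hmeas') key).mono ?_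
  intro ω hω
  have : Summable fun k => (‖h k ω‖₊ : ℝ) := by
    rw [← ENNReal.tsum_coe_ne_top_iff_summable_coe]
    exact hω.ne
  refine Summable.of_norm ?_
  simpa [coe_nnnorm] using this

theorem nat_sqrt_sqrt_pow4_le (n : ℕ) : (Nat.sqrt (Nat.sqrt n))^4 ≤ n := by
  have h1 : Nat.sqrt n ^ 2 ≤ n := Nat.sqrt_le' n
  have h2 : Nat.sqrt (Nat.sqrt n) ^ 2 ≤ Nat.sqrt n := Nat.sqrt_le' _
  calc (Nat.sqrt (Nat.sqrt n))^4 = (Nat.sqrt (Nat.sqrt n) ^ 2)^2 := by ring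
  _ ≤ (Nat.sqrt n)^2 := Nat.pow_le_pow_left h2 2
  _ ≤ n := h1

theorem nat_lt_sqrt_sqrt_succ_pow4 (n : ℕ) : n < (Nat.sqrt (Nat.sqrt n) + 1)^4 := by
  have h1 : n < (Nat.sqrt n).succ ^ 2 := Nat.lt_succ_sqrt' n
  have h2 : Nat.sqrt n < (Nat.sqrt (Nat.sqrt n)).succ ^ 2 := Nat.lt_succ_sqrt' _
  have h3 : (Nat.sqrt n).succ ^ 2 ≤ ((Nat.sqrt (Nat.sqrt n)).succ ^ 2) ^ 2 :=
    Nat.pow_le_pow_left (by omega) 2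
  calc n < (Nat.sqrt n).succ ^ 2 := h1
  _ ≤ ((Nat.sqrt (Nat.sqrt n)).succ ^ 2) ^ 2 := h3
  _ = (Nat.sqrt (Nat.sqrt n) + 1)^4 := by rw [Nat.succ_eq_add_one]; ring

theorem tendsto_sqrt_sqrt_atTop : Tendsto (fun n => Nat.sqrt (Nat.sqrt n)) atTop atTop := by
  apply tendsto_atTop_atTop.mpr
  intro b
  refine ⟨b^4, fun a ha => ?_⟩
  have : b^4 < (Nat.sqrt (Nat.sqrt a) + 1)^4 :=
    lt_of_le_of_lt ha (nat_lt_sqrt_sqrt_succ_pow4 a)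
  have := Nat.pow_lt_pow_iff_left (n := 4) (by omega) |>.mp this
  omega

theorem tendsto_div_of_tendsto_pow4 {S : ℕ → ℝ} (hpos : ∀ n, 0 ≤ S n) (hmono : Monotone S)
    {L : ℝ} (h4 : Tendsto (fun k : ℕ => S ((k+1)^4) / (((k+1)^4 : ℕ) : ℝ)) atTop (nhds L)) :
    Tendsto (fun n => S n / (n : ℝ)) atTop (nhds L) := by
  -- convergence along all fourth powers (k ≥ 1 version, unshifted)
  have h4' : Tendsto (fun k : ℕ => S (k^4) / ((k^4 : ℕ) : ℝ)) atTop (nhds L) := by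
    rw [← tendsto_add_atTop_iff_nat 1]
    exact h4
  have hratio : Tendsto (fun k : ℕ => ((k : ℝ) / ((k : ℝ) + 1))^4) atTop (nhds 1) := by
    have h := Filter.Tendsto.pow (tendsto_natCast_div_add_atTop (1 : ℝ)) 4
    simpa using h
  have hratio' : Tendsto (fun k : ℕ => (((k : ℝ) + 1) / (k : ℝ))^4) atTop (nhds 1) := by
    have h1 : Tendsto (fun k : ℕ => 1 + 1 / (k : ℝ)) atTop (nhds 1) := by
      have := tendsto_one_div_atTop_nhds_zero_nat (𝕜 := ℝ)
      simpa using (tendsto_const_nhds (x := (1:ℝ)) (f := atTop)).add this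
    have h := Filter.Tendsto.pow h1 4
    simp only [add_zero, one_pow] at h
    apply h.congr'
    filter_upwards [eventually_ge_atTop 1] with k hk
    have : (k : ℝ) ≠ 0 := Nat.cast_ne_zero.mpr (by omega)
    field_simp
  -- lower sequence
  have hlow : Tendsto (fun k : ℕ => S (k^4) / (((k:ℝ) + 1)^4)) atTop (nhds L) := by
    have h := h4'.mul hratio
    rw [mul_one] at h
    apply h.congr'
    filter_upwards [eventually_ge_atTop 1] with k hk
    have hk0 : (k : ℝ) ≠ 0 := Nat.cast_ne_zero.mpr (by omega)
    have hk10 : ((k : ℝ) + 1) ≠ 0 := by positivity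
    push_cast
    field_simp
  have hhigh : Tendsto (fun k : ℕ => S ((k+1)^4) / ((k:ℝ))^4) atTop (nhds L) := by
    have h := h4.mul hratio'
    rw [mul_one] at h
    apply h.congr'
    filter_upwards [eventually_ge_atTop 1] with k hk
    have hk0 : (k : ℝ) ≠ 0 := Nat.cast_ne_zero.mpr (by omega)
    have hk10 : ((k : ℝ) + 1) ≠ 0 := by positivity
    push_cast
    field_simp
  -- compose with Nat.sqrt ∘ Nat.sqrt
  have hlowc : Tendsto (fun n : ℕ => S ((Nat.sqrt (Nat.sqrt n))^4)
      / (((Nat.sqrt (Nat.sqrt n) : ℝ) + 1)^4)) atTop (nhds L) :=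
    hlow.comp tendsto_sqrt_sqrt_atTop
  have hhighc : Tendsto (fun n : ℕ => S ((Nat.sqrt (Nat.sqrt n)+1)^4)
      / ((Nat.sqrt (Nat.sqrt n) : ℝ))^4) atTop (nhds L) :=
    hhigh.comp tendsto_sqrt_sqrt_atTop
  apply tendsto_of_tendsto_of_tendsto_of_le_of_le' hlowc hhighc
  · filter_upwards [eventually_ge_atTop 1] with n hn
    set s := Nat.sqrt (Nat.sqrt n) with hs
    have h1 : s^4 ≤ n := nat_sqrt_sqrt_pow4_le n
    have h2 : n < (s+1)^4 := nat_lt_sqrt_sqrt_succ_pow4 n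
    have hn0 : (0:ℝ) < (n:ℝ) := by positivity
    have hs1 : (0:ℝ) < ((s:ℝ)+1)^4 := by positivity
    rw [div_le_div_iff₀ hs1 hn0]
    have hSle : S (s^4) ≤ S n := hmono h1
    have hcast : (n:ℝ) ≤ ((s:ℝ)+1)^4 := by
      have : (n:ℕ) ≤ (s+1)^4 := le_of_lt h2
      calc (n:ℝ) ≤ (((s+1)^4 : ℕ) : ℝ) := Nat.cast_le.mpr this
      _ = ((s:ℝ)+1)^4 := by push_cast; ring
    nlinarith [hpos (s^4), hpos n, hmono h1]
  · filter_upwards [eventually_ge_atTop 1] with n hn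
    set s := Nat.sqrt (Nat.sqrt n) with hs
    have h1 : s^4 ≤ n := nat_sqrt_sqrt_pow4_le n
    have h2 : n < (s+1)^4 := nat_lt_sqrt_sqrt_succ_pow4 n
    have hs1 : 1 ≤ s := by
      by_contra h
      have : s = 0 := by omega
      rw [this] at h2
      simp at h2
      omega
    have hn0 : (0:ℝ) < (n:ℝ) := by positivity
    have hs0 : (0:ℝ) < ((s:ℝ))^4 := by positivity
    rw [div_le_div_iff₀ hn0 hs0]
    have hSle : S n ≤ S ((s+1)^4) := hmono (le_of_lt h2)
    have hcast : ((s:ℝ))^4 ≤ (n:ℝ) := by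
      calc ((s:ℝ))^4 = (((s^4 : ℕ)) : ℝ) := by push_cast; ring
      _ ≤ (n:ℝ) := Nat.cast_le.mpr h1
    nlinarith [hpos n, hpos ((s+1)^4)]

theorem card_inj_tuples (k n : ℕ) :
    ((Fintype.piFinset fun _ : Fin k => Finset.range n).filter
      (fun t => Function.Injective t)).card = n.descFactorial k := by
  classical
  have h1 : n.descFactorial k = Fintype.card (Fin k ↪ Fin n) := by
    rw [Fintype.card_embedding_eq]
    simp
  rw [h1]
  rw [← Finset.card_univ]
  apply Finset.card_bij (fun t ht => (⟨fun l => (⟨t l, by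
      have := Finset.mem_filter.mp ht
      have h2 := Fintype.mem_piFinset.mp this.1 l
      simpa using h2⟩ : Fin n), by
      intro a b hab
      have := Finset.mem_filter.mp ht
      apply this.2
      simpa [Fin.ext_iff] using congrArg Fin.val hab⟩ : Fin k ↪ Fin n))
  · intro t ht
    exact Finset.mem_univ _
  · intro t1 ht1 t2 ht2 heq
    funext l
    have := congrArg (fun f => ((f : Fin k ↪ Fin n) l : ℕ)) heq
    exact this
  · intro f _
    refine ⟨fun l => (f l : ℕ), ?_, ?_⟩
    · rw [Finset.mem_filter]
      constructor
      · rw [Fintype.mem_piFinset]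
        intro l
        simpa using (f l).2
      · intro a b hab
        exact f.injective (Fin.ext (by simpa using hab))
    · ext l
      rfl

section
variable {Ω : Type*} [MeasurableSpace Ω] (P : Measure Ω) [IsProbabilityMeasure P]
    {d : ℕ} (X : ℕ → Ω → Fin d) (hX : ∀ n, Measurable (X n))
    (hexch : ∀ σ : Equiv.Perm ℕ, {i | σ i ≠ i}.Finite →
      P.map (fun ω => fun n => X (σ n) ω) = P.map (fun ω => fun n => X n ω))

omit hexch in
include hX in
theorem W_bounds (j : Fin d) (n : ℕ) (ω : Ω) :
    0 ≤ (∑ i ∈ Finset.range n, if X i ω = j then (1:ℝ) else 0) / (n : ℝ)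
    ∧ (∑ i ∈ Finset.range n, if X i ω = j then (1:ℝ) else 0) / (n : ℝ) ≤ 1 := by
  have h0 : 0 ≤ ∑ i ∈ Finset.range n, if X i ω = j then (1:ℝ) else 0 :=
    Finset.sum_nonneg fun i _ => by positivity
  have h1 : (∑ i ∈ Finset.range n, if X i ω = j then (1:ℝ) else 0) ≤ n := by
    calc (∑ i ∈ Finset.range n, if X i ω = j then (1:ℝ) else 0)
        ≤ ∑ i ∈ Finset.range n, (1:ℝ) := Finset.sum_le_sum fun i _ => by split <;> norm_num
    _ = n := by simp
  rcases Nat.eq_zero_or_pos n with hn | hn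
  · subst hn; simp
  · have hn0 : (0:ℝ) < n := by positivity
    exact ⟨div_nonneg h0 hn0.le, (div_le_one hn0).mpr h1⟩

omit hexch in
include hX in
theorem integrable_W (j : Fin d) (n : ℕ) :
    Integrable (fun ω => (∑ i ∈ Finset.range n, if X i ω = j then (1:ℝ) else 0) / (n : ℝ)) P :=
  (integrable_finset_sum _ fun i _ => integrable_F P X hX i j).div_const _

omit hexch in
include hX in
theorem measurable_W (j : Fin d) (n : ℕ) :
    Measurable (fun ω => (∑ i ∈ Finset.range n, if X i ω = j then (1:ℝ) else 0) / (n : ℝ)) :=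
  (Finset.measurable_sum _ fun i _ => measurable_F X hX i j).div_const _

include hX hexch in
theorem ae_tendsto_pow4 (j : Fin d) :
    ∀ᵐ ω ∂P, ∃ L : ℝ, Tendsto (fun k : ℕ =>
      (∑ i ∈ Finset.range ((k+1)^4), if X i ω = j then (1:ℝ) else 0) / (((k+1)^4 : ℕ) : ℝ))
      atTop (nhds L) := by
  classical
  set W : ℕ → Ω → ℝ :=
    fun n ω => (∑ i ∈ Finset.range n, if X i ω = j then (1:ℝ) else 0) / (n : ℝ) with hW
  set h : ℕ → Ω → ℝ := fun k ω => W ((k+1)^4) ω - W ((k+2)^4) ω with hh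
  have hmeas : ∀ k, Measurable (h k) := fun k =>
    (measurable_W X hX j _).sub (measurable_W X hX j _)
  have hint : ∀ k, Integrable (h k) P := fun k =>
    (integrable_W P X hX j _).sub (integrable_W P X hX j _)
  have habs2 : ∀ k ω, |h k ω| ≤ 2 := by
    intro k ω
    have b1 := W_bounds X hX j ((k+1)^4) ω
    have b2 := W_bounds X hX j ((k+2)^4) ω
    rw [abs_le]
    constructor <;> simp only [hh] <;> [linarith [b1.1, b2.2]; linarith [b1.2, b2.1]]
  have hint2 : ∀ k, Integrable (fun ω => h k ω ^ 2) P := by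
    intro k
    apply Integrable.mono' (integrable_const (4:ℝ)) ((hmeas k).pow_const 2).aestronglyMeasurable
    filter_upwards with ω
    have := habs2 k ω
    rw [Real.norm_eq_abs, abs_pow]
    nlinarith [abs_nonneg (h k ω)]
  have hIsq : ∀ k : ℕ, ∫ ω, h k ω ^ 2 ∂P ≤ (1 / ((k:ℝ)+1)^2)^2 := by
    intro k
    have hm : 1 ≤ (k+1)^4 := Nat.one_le_pow _ _ (by omega)
    have hmn : (k+1)^4 ≤ (k+2)^4 := Nat.pow_le_pow_left (by omega) 4
    have heq := int_sq_diff P X hX hexch j hm hmn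
    have : ∫ ω, h k ω ^ 2 ∂P
        = ((P (⋂ l : Fin 1, {ω | X (l : ℕ) ω = j})).toReal
          - (P (⋂ l : Fin 2, {ω | X (l : ℕ) ω = j})).toReal)
          * (1/(((k+1)^4 : ℕ) : ℝ) - 1/(((k+2)^4 : ℕ) : ℝ)) := heq
    rw [this]
    set v := (P (⋂ l : Fin 1, {ω | X (l : ℕ) ω = j})).toReal with hv
    set c := (P (⋂ l : Fin 2, {ω | X (l : ℕ) ω = j})).toReal with hc
    have hvc0 : 0 ≤ v - c := v_sub_c_nonneg P X hX hexch j
    have hv1 : v ≤ 1 := by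
      rw [hv]
      exact ENNReal.toReal_le_of_le_ofReal zero_le_one (by simpa using prob_le_one)
    have hc0 : 0 ≤ c := ENNReal.toReal_nonneg
    have hm0 : (0:ℝ) < (((k+1)^4 : ℕ) : ℝ) := by positivity
    have hn0 : (0:ℝ) < (((k+2)^4 : ℕ) : ℝ) := by positivity
    have hcast : (((k+1)^4 : ℕ) : ℝ) = (((k:ℝ)+1)^2)^2 := by push_cast; ring
    have h1 : 1/(((k+1)^4 : ℕ) : ℝ) - 1/(((k+2)^4 : ℕ) : ℝ) ≤ 1/(((k+1)^4 : ℕ) : ℝ) := by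
      have : 0 ≤ 1/(((k+2)^4 : ℕ) : ℝ) := by positivity
      linarith
    have h2 : 0 ≤ 1/(((k+1)^4 : ℕ) : ℝ) - 1/(((k+2)^4 : ℕ) : ℝ) := by
      have : 1/(((k+2)^4 : ℕ) : ℝ) ≤ 1/(((k+1)^4 : ℕ) : ℝ) :=
        one_div_le_one_div_of_le hm0 (Nat.cast_le.mpr hmn)
      linarith
    calc (v - c) * (1/(((k+1)^4 : ℕ) : ℝ) - 1/(((k+2)^4 : ℕ) : ℝ))
        ≤ 1 * (1/(((k+1)^4 : ℕ) : ℝ)) := by nlinarith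
    _ = (1 / ((k:ℝ)+1)^2)^2 := by rw [hcast]; field_simp
  have hB : ∀ k : ℕ, ∫ ω, |h k ω| ∂P ≤ 1/((k:ℝ)+1)^2 := by
    intro k
    have hcs := sq_integral_abs_le P (hint k) (hint2 k)
    have hq := hIsq k
    have h0 : 0 ≤ ∫ ω, |h k ω| ∂P := integral_nonneg fun ω => abs_nonneg _
    have hb0 : (0:ℝ) < 1/((k:ℝ)+1)^2 := by positivity
    nlinarith
  have hBsum : Summable (fun k : ℕ => 1/((k:ℝ)+1)^2) := by
    have h1 : Summable (fun n : ℕ => 1/(n:ℝ)^2) :=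
      Real.summable_one_div_nat_pow.mpr (by norm_num)
    have h2 := (summable_nat_add_iff 1).mpr h1
    apply h2.congr
    intro k
    push_cast
    ring
  filter_upwards [ae_summable_of_summable_bound P hmeas hint hB hBsum] with ω hsum
  have htend := hsum.hasSum.tendsto_sum_nat
  have hpart : ∀ K : ℕ, ∑ i ∈ Finset.range K, h i ω = W 1 ω - W ((K+1)^4) ω := by
    intro K
    have := Finset.sum_range_sub' (f := fun i => W ((i+1)^4) ω) K
    simpa [hh] using this
  refine ⟨W 1 ω - ∑' i, h i ω, ?_⟩
  have : Tendsto (fun K => W 1 ω - ∑ i ∈ Finset.range K, h i ω) atTop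
      (nhds (W 1 ω - ∑' i, h i ω)) := tendsto_const_nhds.sub htend
  apply this.congr
  intro K
  rw [hpart K]
  simp [hW]
end

section
variable {Ω : Type*} [MeasurableSpace Ω] (P : Measure Ω) [IsProbabilityMeasure P]
    {d : ℕ} (X : ℕ → Ω → Fin d) (hX : ∀ n, Measurable (X n))

include hX in
theorem integrable_prodF {k : ℕ} (t : Fin k → ℕ) (a : Fin k → Fin d) :
    Integrable (fun ω => ∏ l : Fin k, if X (t l) ω = a l then (1:ℝ) else 0) P := by
  apply Integrable.mono' (integrable_const (1:ℝ))
    (Finset.measurable_prod _ fun l _ => measurable_F X hX (t l) (a l)).aestronglyMeasurable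
  filter_upwards with ω
  rw [Real.norm_eq_abs, abs_of_nonneg (Finset.prod_nonneg fun l _ => by split <;> norm_num)]
  exact Finset.prod_le_one (fun l _ => by split <;> norm_num) (fun l _ => by split <;> norm_num)

omit hX in
theorem desc_ratio_tendsto (k : ℕ) :
    Tendsto (fun n : ℕ => ((n.descFactorial k : ℕ) : ℝ) / (n:ℝ)^k) atTop (nhds 1) := by
  have hfac : ∀ i : ℕ, Tendsto (fun n : ℕ => 1 - (i:ℝ)/(n:ℝ)) atTop (nhds 1) := by
    intro i
    have h0 : Tendsto (fun n : ℕ => (i:ℝ)/(n:ℝ)) atTop (nhds 0) :=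
      Tendsto.div_atTop tendsto_const_nhds tendsto_natCast_atTop_atTop
    simpa using tendsto_const_nhds.sub h0
  have hprod : Tendsto (fun n : ℕ => ∏ i ∈ Finset.range k, (1 - (i:ℝ)/(n:ℝ))) atTop
      (nhds (∏ i ∈ Finset.range k, (1:ℝ))) :=
    tendsto_finset_prod _ (fun i _ => hfac i)
  simp only [Finset.prod_const_one] at hprod
  apply hprod.congr'
  filter_upwards [eventually_ge_atTop (k+1)] with n hn
  have hn0 : (n:ℝ) ≠ 0 := Nat.cast_ne_zero.mpr (by omega)
  rw [Nat.descFactorial_eq_prod_range]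
  rw [Nat.cast_prod]
  have hcast : ∀ i ∈ Finset.range k, ((n - i : ℕ) : ℝ) = (n:ℝ) - (i:ℝ) := by
    intro i hi
    have : i ≤ n := by
      have := Finset.mem_range.mp hi
      omega
    push_cast [this]
    ring
  rw [Finset.prod_congr rfl hcast]
  rw [eq_comm, div_eq_iff (by positivity)]
  calc ∏ i ∈ Finset.range k, ((n:ℝ) - (i:ℝ))
      = ∏ i ∈ Finset.range k, ((1 - (i:ℝ)/(n:ℝ)) * (n:ℝ)) := by
        refine Finset.prod_congr rfl fun i _ => ?_
        rw [sub_mul, one_mul, div_mul_cancel₀ _ hn0]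
  _ = (∏ i ∈ Finset.range k, (1 - (i:ℝ)/(n:ℝ))) * ∏ _i ∈ Finset.range k, (n:ℝ) :=
        Finset.prod_mul_distrib
  _ = (∏ i ∈ Finset.range k, (1 - (i:ℝ)/(n:ℝ))) * (n:ℝ)^k := by
        rw [Finset.prod_const, Finset.card_range]
end

/-- de Finetti's theorem for a finite state space E = {1,…,d}: for an
exchangeable X there is a random probability vector M with values in the simplex
S(d) such that conditionally on M the X_n are i.i.d. with distribution M, i.e.
P(X_1 = a_1,…,X_k = a_k) = ∫ ∏ μ(a_i) dP^M(μ); moreover M may be taken as the a.s.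
limit of the empirical frequencies Y_n/n. -/
theorem deFinetti_finite_state_space
    {Ω : Type*} [MeasurableSpace Ω] (P : Measure Ω) [IsProbabilityMeasure P]
    (d : ℕ) (hd : 0 < d)
    (X : ℕ → Ω → Fin d) (hX : ∀ n, Measurable (X n))
    (hexch : ∀ σ : Equiv.Perm ℕ, {i | σ i ≠ i}.Finite →
      P.map (fun ω => fun n => X (σ n) ω) = P.map (fun ω => fun n => X n ω))
    (Y : ℕ → Ω → Fin d → ℕ)
    (hYdef : ∀ n ω j, Y n ω j = ((Finset.range n).filter (fun i => X i ω = j)).card) :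
    ∃ M : Ω → Fin d → ℝ, Measurable M
      -- M takes values in the probability simplex S(d)
      ∧ (∀ᵐ ω ∂P, (∀ j, 0 ≤ M ω j) ∧ ∑ j, M ω j = 1)
      -- M is the a.s. limit of the empirical frequency vectors Y_n/n
      ∧ (∀ᵐ ω ∂P, ∀ j, Tendsto (fun n => (Y n ω j : ℝ) / (n : ℝ)) atTop (nhds (M ω j)))
      -- conditionally on M, the X_n are i.i.d. with distribution M
      ∧ (∀ (k : ℕ) (a : Fin k → Fin d),
          (P (⋂ i : Fin k, {ω | X i ω = a i})).toReal
            = ∫ ω, ∏ i : Fin k, M ω (a i) ∂P) := by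

  classical
  set W : ℕ → Fin d → Ω → ℝ :=
    fun n j ω => (∑ i ∈ Finset.range n, if X i ω = j then (1:ℝ) else 0) / (n : ℝ) with hWdef
  set M : Ω → Fin d → ℝ := fun ω j =>
    (Filter.limsup (fun k : ℕ => ENNReal.ofReal (W ((k+1)^4) j ω)) atTop).toReal with hMdef
  -- measurability
  have hMmeas : Measurable M := by
    apply measurable_pi_lambda
    intro j
    apply Measurable.ennreal_toReal
    exact Measurable.limsup fun k => (measurable_W X hX j ((k+1)^4)).ennreal_ofReal
  -- the good event
  have hG : ∀ᵐ ω ∂P, ∀ j : Fin d, ∃ L : ℝ, Tendsto (fun k : ℕ => W ((k+1)^4) j ω)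
      atTop (nhds L) := by
    rw [ae_all_iff]
    intro j
    exact ae_tendsto_pow4 P X hX hexch j
  -- on the good event, full convergence to M
  have hconv : ∀ ω, (∀ j : Fin d, ∃ L : ℝ, Tendsto (fun k : ℕ => W ((k+1)^4) j ω)
      atTop (nhds L)) → ∀ j, Tendsto (fun n => W n j ω) atTop (nhds (M ω j)) := by
    intro ω hω j
    obtain ⟨L, hL⟩ := hω j
    have hL0 : 0 ≤ L := ge_of_tendsto' hL fun k => (W_bounds X hX j _ ω).1
    have hofReal : Tendsto (fun k : ℕ => ENNReal.ofReal (W ((k+1)^4) j ω)) atTop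
        (nhds (ENNReal.ofReal L)) := (ENNReal.continuous_ofReal.tendsto L).comp hL
    have hMj : M ω j = L := by
      rw [hMdef]
      simp only
      rw [hofReal.limsup_eq, ENNReal.toReal_ofReal hL0]
    rw [hMj]
    apply tendsto_div_of_tendsto_pow4
        (S := fun n => ∑ i ∈ Finset.range n, if X i ω = j then (1:ℝ) else 0)
    · intro n
      exact Finset.sum_nonneg fun i _ => by split <;> norm_num
    · intro m n hmn
      apply Finset.sum_le_sum_of_subset_of_nonneg (Finset.range_subset_range.mpr hmn)
      intro i _ _
      split <;> norm_num
    · exact hL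
  refine ⟨M, hMmeas, ?_, ?_, ?_⟩
  · -- simplex membership
    filter_upwards [hG] with ω hω
    have ht := hconv ω hω
    constructor
    · intro j
      exact ge_of_tendsto' (ht j) fun n => (W_bounds X hX j n ω).1
    · have hsum : Tendsto (fun n => ∑ j : Fin d, W n j ω) atTop (nhds (∑ j, M ω j)) :=
        tendsto_finset_sum _ (fun j _ => ht j)
      have hone : Tendsto (fun n => ∑ j : Fin d, W n j ω) atTop (nhds 1) := by
        apply tendsto_const_nhds.congr'
        filter_upwards [eventually_ge_atTop 1] with n hn
        have hn0 : (n:ℝ) ≠ 0 := Nat.cast_ne_zero.mpr (by omega)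
        rw [hWdef]
        simp only
        rw [← Finset.sum_div, Finset.sum_comm]
        have hinner : ∀ i ∈ Finset.range n,
            (∑ j : Fin d, if X i ω = j then (1:ℝ) else 0) = 1 := by
          intro i _
          rw [Finset.sum_ite_eq]
          simp
        rw [Finset.sum_congr rfl hinner, Finset.sum_const, Finset.card_range, nsmul_eq_mul,
          mul_one, div_self hn0]
      exact tendsto_nhds_unique hsum hone
  · -- a.s. convergence of empirical frequencies
    filter_upwards [hG] with ω hω j
    have ht := hconv ω hω j
    apply ht.congr
    intro n
    rw [hYdef]
    rw [hWdef]
    simp only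
    congr 1
    rw [Finset.card_filter]
    push_cast
    rfl
  · -- the mixing identity
    intro k a
    set p := (P (⋂ i : Fin k, {ω | X i ω = a i})).toReal with hp
    have hp0 : 0 ≤ p := ENNReal.toReal_nonneg
    have hp1 : p ≤ 1 := by
      rw [hp]
      exact ENNReal.toReal_le_of_le_ofReal zero_le_one (by simpa using prob_le_one)
    set g : ℕ → Ω → ℝ := fun n ω => ∏ l : Fin k, W n (a l) ω with hg
    have hglim : ∀ᵐ ω ∂P, Tendsto (fun n => g n ω) atTop (nhds (∏ l : Fin k, M ω (a l))) := by
      filter_upwards [hG] with ω hω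
      exact tendsto_finset_prod _ (fun l _ => hconv ω hω (a l))
    have hgmeas : ∀ n, AEStronglyMeasurable (g n) P := fun n =>
      (Finset.measurable_prod _ fun l _ => measurable_W X hX (a l) n).aestronglyMeasurable
    have hgbound : ∀ n, ∀ᵐ ω ∂P, ‖g n ω‖ ≤ 1 := by
      intro n
      filter_upwards with ω
      rw [Real.norm_eq_abs, abs_of_nonneg (Finset.prod_nonneg fun l _ =>
        (W_bounds X hX (a l) n ω).1)]
      exact Finset.prod_le_one (fun l _ => (W_bounds X hX (a l) n ω).1)
        (fun l _ => (W_bounds X hX (a l) n ω).2)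
    have hDCT := tendsto_integral_of_dominated_convergence (fun _ => (1:ℝ)) hgmeas
      (integrable_const 1) hgbound hglim
    -- now show the integrals tend to p
    have hval : ∀ n : ℕ, 1 ≤ n → ∫ ω, g n ω ∂P
        = (∑ t ∈ Fintype.piFinset (fun _ : Fin k => Finset.range n),
            (P (⋂ l : Fin k, {ω | X (t l) ω = a l})).toReal) / (n:ℝ)^k := by
      intro n hn
      have hpt : ∀ ω, g n ω = (∑ t ∈ Fintype.piFinset (fun _ : Fin k => Finset.range n),
          ∏ l : Fin k, if X (t l) ω = a l then (1:ℝ) else 0) / (n:ℝ)^k := by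
        intro ω
        rw [hg]
        simp only
        rw [hWdef]
        simp only
        rw [Finset.prod_div_distrib, Finset.prod_const, Finset.card_univ, Fintype.card_fin,
          Finset.prod_univ_sum]
      simp_rw [hpt]
      rw [integral_div, integral_finset_sum _
        (fun t _ => integrable_prodF P X hX t a)]
      congr 1
      refine Finset.sum_congr rfl fun t _ => ?_
      exact integral_prod_ite P X hX a t
    have hbnd : ∀ n : ℕ, 1 ≤ n → |(∫ ω, g n ω ∂P) - p|
        ≤ 1 - ((n.descFactorial k : ℕ) : ℝ)/(n:ℝ)^k := by
      intro n hn
      have hn0 : (0:ℝ) < (n:ℝ)^k := by positivity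
      rw [hval n hn]
      set T := Fintype.piFinset (fun _ : Fin k => Finset.range n) with hT
      have hcardT : T.card = n^k := by
        rw [hT, Fintype.card_piFinset]
        simp
      have hsplit := Finset.sum_filter_add_sum_filter_not T (fun t => Function.Injective t)
        (fun t => (P (⋂ l : Fin k, {ω | X (t l) ω = a l})).toReal)
      have hinjval : ∀ t ∈ T.filter (fun t => Function.Injective t),
          (P (⋂ l : Fin k, {ω | X (t l) ω = a l})).toReal = p := by
        intro t ht
        rw [exch_cylinder P X hX hexch a t (Finset.mem_filter.mp ht).2, hp]
      have hinjsum : ∑ t ∈ T.filter (fun t => Function.Injective t),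
          (P (⋂ l : Fin k, {ω | X (t l) ω = a l})).toReal
          = ((n.descFactorial k : ℕ) : ℝ) * p := by
        rw [Finset.sum_congr rfl hinjval, Finset.sum_const, nsmul_eq_mul]
        congr 2
        exact card_inj_tuples k n
      have hcardnon : ((T.filter (fun t => ¬ Function.Injective t)).card : ℝ)
          = (n:ℝ)^k - ((n.descFactorial k : ℕ) : ℝ) := by
        have := Finset.card_filter_add_card_filter_not
          (s := T) (p := fun t => Function.Injective t)
        have hcc := card_inj_tuples k n
        rw [← hT] at hcc
        have : (T.filter (fun t => ¬ Function.Injective t)).card = n^k - n.descFactorial k := by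
          omega
        rw [this]
        have hle : n.descFactorial k ≤ n^k := Nat.descFactorial_le_pow n k
        push_cast [hle]
        ring
      have hRnonneg : 0 ≤ ∑ t ∈ T.filter (fun t => ¬ Function.Injective t),
          (P (⋂ l : Fin k, {ω | X (t l) ω = a l})).toReal :=
        Finset.sum_nonneg fun t _ => ENNReal.toReal_nonneg
      have hRle : ∑ t ∈ T.filter (fun t => ¬ Function.Injective t),
          (P (⋂ l : Fin k, {ω | X (t l) ω = a l})).toReal
          ≤ (n:ℝ)^k - ((n.descFactorial k : ℕ) : ℝ) := by
        rw [← hcardnon]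
        calc ∑ t ∈ T.filter (fun t => ¬ Function.Injective t),
            (P (⋂ l : Fin k, {ω | X (t l) ω = a l})).toReal
            ≤ ∑ t ∈ T.filter (fun t => ¬ Function.Injective t), (1:ℝ) := by
              apply Finset.sum_le_sum
              intro t _
              exact ENNReal.toReal_le_of_le_ofReal zero_le_one (by simpa using prob_le_one)
        _ = ((T.filter (fun t => ¬ Function.Injective t)).card : ℝ) := by simp
      have hdesc_le : ((n.descFactorial k : ℕ) : ℝ) ≤ (n:ℝ)^k := by
        have := Nat.descFactorial_le_pow n k
        push_cast [this]
        exact_mod_cast Nat.cast_le.mpr this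
      rw [← hsplit, hinjsum]
      set R := ∑ t ∈ T.filter (fun t => ¬ Function.Injective t),
          (P (⋂ l : Fin k, {ω | X (t l) ω = a l})).toReal with hR
      set D := ((n.descFactorial k : ℕ) : ℝ) with hD
      set N := (n:ℝ)^k with hN
      have hD0 : 0 ≤ D := Nat.cast_nonneg _
      have key : (D * p + R)/N - p = (D * p + R - N * p)/N := by
        field_simp
      rw [key, abs_div, abs_of_pos hn0, div_le_iff₀ hn0]
      have hgoal : (1 - D / N) * N = N - D := by
        field_simp
      rw [hgoal]
      rw [abs_le]
      constructor
      · nlinarith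
      · nlinarith
    have he : Tendsto (fun n : ℕ => 1 - ((n.descFactorial k : ℕ) : ℝ)/(n:ℝ)^k) atTop
        (nhds 0) := by
      have := tendsto_const_nhds (x := (1:ℝ)) (f := (atTop : Filter ℕ))
      have h2 := this.sub (desc_ratio_tendsto k)
      simpa using h2
    have hzero : Tendsto (fun n => (∫ ω, g n ω ∂P) - p) atTop (nhds 0) := by
      apply squeeze_zero_norm' _ he
      filter_upwards [eventually_ge_atTop 1] with n hn
      rw [Real.norm_eq_abs]
      exact hbnd n hn
    have hlim2 : Tendsto (fun n => ∫ ω, g n ω ∂P) atTop (nhds p) :=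
      tendsto_sub_nhds_zero_iff.mp hzero
    exact (tendsto_nhds_unique hDCT hlim2).symm
end
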